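/- arXiv:math/0605665 — 5 statements merged into one kernel-verified Lean document; each statement's English description precedes it below -/
import Mathlib

section
/- Assume α > C. If ν and ν′ are two probability measures on Λ each satisfying ∑_{y∈Λ} ν(y)·(q(y,x) + q(y,0)·ν(x)) = 0 for every x ∈ Λ, then ν = ν′; that is, Q has at most one quasi-stationary distribution. -/
open scoped BigOperators Topology

private lemma tsum_option_split' {β : Type*} (f : Option β → ℝ) (hf : Summable f) :
    ∑' z, f z = f none + ∑' b, f (some b) := by
  classical
  rw [Summable.tsum_eq_add_tsum_ite hf none]
  congr 1
  have h1 : Function.Injective (some : β → Option β) := Option.some_injective β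
  have h2 : Function.support (fun z : Option β => if z = none then 0 else f z)
      ⊆ Set.range (some : β → Option β) := by
    intro z hz
    cases z with
    | none => simp [Function.mem_support] at hz
    | some b => exact ⟨b, rfl⟩
  have := h1.tsum_eq (f := fun z : Option β => if z = none then 0 else f z) h2
  rw [← this]
  exact tsum_congr fun b => by simp

private def optSubtypeEquiv {β : Type*} (y : β) :
    Option {x : β // x ≠ y} ≃ {z : Option β // z ≠ some y} where
  toFun o :=
    match o with
    | none => ⟨none, by simp⟩
    | some x => ⟨some x.1, by simp [x.2]⟩
  invFun z :=
    match z with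
    | ⟨none, _⟩ => none
    | ⟨some x, h⟩ => some ⟨x, by rintro rfl; exact h rfl⟩
  left_inv o := by rcases o with _ | x <;> rfl
  right_inv z := by rcases z with ⟨_ | x, h⟩ <;> rfl

private lemma summable_subtype_option {β : Type*} (y : β) (f : Option β → ℝ)
    (hf : Summable fun z : {z : Option β // z ≠ some y} => f ↑z) :
    Summable fun x : {x : β // x ≠ y} => f (some ↑x) := by
  have h := hf.comp_injective
    ((optSubtypeEquiv y).injective.comp (Option.some_injective _))
  exact h

private lemma tsum_subtype_option {β : Type*} (y : β) (f : Option β → ℝ)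
    (hf : Summable fun z : {z : Option β // z ≠ some y} => f ↑z) :
    (∑' z : {z : Option β // z ≠ some y}, f ↑z)
      = f none + ∑' x : {x : β // x ≠ y}, f (some ↑x) := by
  rw [← (optSubtypeEquiv y).tsum_eq (fun z : {z : Option β // z ≠ some y} => f ↑z)]
  rw [tsum_option_split' (fun c => f ↑((optSubtypeEquiv y) c))
      (((optSubtypeEquiv y).summable_iff
      (f := fun z : {z : Option β // z ≠ some y} => f ↑z)).2 hf)]
  rfl

/-- If `α > C`, there is at most one quasi-stationary distribution for `Q`. -/
theorem fv_qsd_uniqueness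
    {Λ : Type*} [Countable Λ] [Nonempty Λ] [DecidableEq Λ]
    -- the rate matrix Q on Λ ∪ {0} (`none` is the absorbing state 0)
    (q : Option Λ → Option Λ → ℝ)
    (hq_nonneg : ∀ x y, x ≠ y → 0 ≤ q x y)
    (hq_absorb : ∀ y, q none y = 0)
    (hq_summable : ∀ x, Summable (fun y : {y : Option Λ // y ≠ x} => q x (y : Option Λ)))
    (hq_diag : ∀ x, q x x = -∑' y : {y : Option Λ // y ≠ x}, q x (y : Option Λ))
    (qbar : ℝ)
    (hqbar : ∀ x, (∑' y : {y : Option Λ // y ≠ x}, q x (y : Option Λ)) ≤ qbar)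
    -- the transition semigroup P of Q
    (P : ℝ → Option Λ → Option Λ → ℝ)
    (hP_nonneg : ∀ t, 0 ≤ t → ∀ x y, 0 ≤ P t x y)
    (hP_rowsum : ∀ t, 0 ≤ t → ∀ x, HasSum (P t x) 1)
    (hP_zero : ∀ x y, P 0 x y = if x = y then 1 else 0)
    (hP_CK : ∀ s t, 0 ≤ s → 0 ≤ t → ∀ x y,
      P (t + s) x y = ∑' z : Option Λ, P t x z * P s z y)
    (hP_forward : ∀ t, 0 < t → ∀ z : Λ, ∀ x : Option Λ,
      HasDerivAt (fun s => P s (some z) x)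
        (∑' y : Λ, P t (some z) (some y) * q (some y) x) t)
    (hP_pos : ∀ t, 0 < t → ∀ x y : Λ, 0 < P t (some x) (some y))
    (hP_abs : ∀ x : Λ,
      Filter.Tendsto (fun t => P t (some x) none) Filter.atTop (nhds 1))
    -- ergodicity coefficient and maximal absorption rate
    (α C : ℝ)
    (hα : α = ∑' z : Λ, ⨅ x : {x : Λ // x ≠ z}, q (some (x : Λ)) (some z))
    (hC : C = ⨆ x : Λ, q (some x) none)
    (hαC : C < α)
    (ν ν' : Λ → ℝ)
    (hν_nonneg : ∀ x, 0 ≤ ν x) (hν_sum : HasSum ν 1)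
    (hν_qsd : ∀ x : Λ,
      ∑' y : Λ, ν y * (q (some y) (some x) + q (some y) none * ν x) = 0)
    (hν'_nonneg : ∀ x, 0 ≤ ν' x) (hν'_sum : HasSum ν' 1)
    (hν'_qsd : ∀ x : Λ,
      ∑' y : Λ, ν' y * (q (some y) (some x) + q (some y) none * ν' x) = 0) :
    ν = ν' := by
  classical
  obtain ⟨y₀⟩ := (inferInstance : Nonempty Λ)
  -- basic positivity
  have hq0nn : ∀ y : Λ, 0 ≤ q (some y) none := fun y => hq_nonneg _ _ (by simp)
  have hQnn : ∀ y x : Λ, y ≠ x → 0 ≤ q (some y) (some x) :=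
    fun y x h => hq_nonneg _ _ (by simpa using h)
  -- row facts
  have hSrow : ∀ y : Λ, Summable fun x : {x : Λ // x ≠ y} => q (some y) (some ↑x) :=
    fun y => summable_subtype_option y (q (some y)) (hq_summable (some y))
  have hRnn : ∀ y : Λ, 0 ≤ ∑' x : {x : Λ // x ≠ y}, q (some y) (some ↑x) :=
    fun y => tsum_nonneg fun x => hQnn y x (Ne.symm x.2)
  have hrow_eq : ∀ y : Λ, q (some y) (some y)
      = -(q (some y) none + ∑' x : {x : Λ // x ≠ y}, q (some y) (some ↑x)) := by
    intro y
    rw [hq_diag (some y), tsum_subtype_option y (q (some y)) (hq_summable (some y))]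
  have hrow_le : ∀ y : Λ,
      q (some y) none + (∑' x : {x : Λ // x ≠ y}, q (some y) (some ↑x)) ≤ qbar := by
    intro y
    rw [← tsum_subtype_option y (q (some y)) (hq_summable (some y))]
    exact hqbar (some y)
  have hqbar0 : 0 ≤ qbar :=
    le_trans (le_trans (hq0nn y₀) (le_add_of_nonneg_right (hRnn y₀))) (hrow_le y₀)
  have hq0le : ∀ y : Λ, q (some y) none ≤ qbar :=
    fun y => le_trans (le_add_of_nonneg_right (hRnn y)) (hrow_le y)
  have hQle : ∀ y x : Λ, x ≠ y → q (some y) (some x) ≤ qbar := by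
    intro y x h
    have h1 : q (some y) (some x) ≤ ∑' z : {z : Λ // z ≠ y}, q (some y) (some ↑z) :=
      Summable.le_tsum (hSrow y) ⟨x, h⟩ fun j _ => hQnn y j (Ne.symm j.2)
    have h2 := hrow_le y
    have h3 := hq0nn y
    linarith
  have hQabs : ∀ y x : Λ, |q (some y) (some x)| ≤ qbar := by
    intro y x
    by_cases h : x = y
    · subst h
      rw [hrow_eq x, abs_neg, abs_of_nonneg (add_nonneg (hq0nn x) (hRnn x))]
      exact hrow_le x
    · rw [abs_of_nonneg (hQnn y x (Ne.symm h))]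
      exact hQle y x h
  -- full-row over Λ
  have hrowΛ_summable : ∀ y : Λ, Summable fun x : Λ => q (some y) (some x) := by
    intro y
    have hi : Function.Injective
        (fun x : {x : Λ // x ∉ ({y} : Finset Λ)} => (⟨x.1, by simpa using x.2⟩ : {x : Λ // x ≠ y})) := by
      intro a b hab
      have h' : (a : Λ) = (b : Λ) := congrArg (Subtype.val : {x : Λ // x ≠ y} → Λ) hab
      exact Subtype.ext h'
    have h1 : Summable fun x : {x : Λ // x ∉ ({y} : Finset Λ)} => q (some y) (some ↑x) :=
      ((hSrow y).comp_injective hi).congr (fun x => rfl)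
    exact (({y} : Finset Λ).summable_compl_iff (f := fun x => q (some y) (some x))).1 h1
  have hrowΛ : ∀ y : Λ, ∑' x : Λ, q (some y) (some x) = -q (some y) none := by
    intro y
    rw [Summable.tsum_eq_add_tsum_ite (hrowΛ_summable y) y]
    have h2 : (∑' x : Λ, if x = y then 0 else q (some y) (some x))
        = ∑' x : {x : Λ // x ≠ y}, q (some y) (some ↑x) := by
      have hinj : Function.Injective (Subtype.val : {x : Λ // x ≠ y} → Λ) :=
        Subtype.val_injective
      have hsupp : Function.support (fun x : Λ => if x = y then 0 else q (some y) (some x))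
          ⊆ Set.range (Subtype.val : {x : Λ // x ≠ y} → Λ) := by
        intro x hx
        have : x ≠ y := by
          intro h; apply hx; simp [h]
        exact ⟨⟨x, this⟩, rfl⟩
      rw [← hinj.tsum_eq hsupp]
      exact tsum_congr fun c => by rw [if_neg c.2]
    rw [h2, hrow_eq y]
    ring
  -- the ergodicity coefficient entries
  set αf : Λ → ℝ := fun z => ⨅ x : {x : Λ // x ≠ z}, q (some (x : Λ)) (some z) with hαf_def
  have hαfnn : ∀ x : Λ, 0 ≤ αf x :=
    fun x => Real.iInf_nonneg fun z => hQnn _ _ z.2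
  have hαfle : ∀ x z : Λ, z ≠ x → αf x ≤ q (some z) (some x) := by
    intro x z h
    have hbdd : BddBelow (Set.range fun z : {z : Λ // z ≠ x} => q (some (z : Λ)) (some x)) := by
      refine ⟨0, ?_⟩
      rintro _ ⟨i, rfl⟩
      exact hQnn _ _ i.2
    exact ciInf_le hbdd (⟨z, h⟩ : {z : Λ // z ≠ x})
  have hq0C : ∀ y : Λ, q (some y) none ≤ C := by
    intro y
    have hbdd : BddAbove (Set.range fun x : Λ => q (some x) none) := by
      refine ⟨qbar, ?_⟩
      rintro _ ⟨x, rfl⟩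
      exact hq0le x
    rw [hC]
    exact le_ciSup hbdd y
  have hC0 : 0 ≤ C := le_trans (hq0nn y₀) (hq0C y₀)
  have hαpos : 0 < α := lt_of_le_of_lt hC0 hαC
  have hαfsum : Summable αf := by
    by_contra h
    rw [hα] at hαpos
    rw [tsum_eq_zero_of_not_summable h] at hαpos
    exact lt_irrefl 0 hαpos
  have hαftsum : ∑' x : Λ, αf x = α := hα.symm
  have hαfα : ∀ x : Λ, αf x ≤ α := by
    intro x
    rw [← hαftsum]
    exact Summable.le_tsum hαfsum x fun j _ => hαfnn j
  -- summability of measure-weighted rows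
  have hsumQ : ∀ (ρ : Λ → ℝ), (∀ x, 0 ≤ ρ x) → Summable ρ →
      ∀ x : Λ, Summable fun y : Λ => ρ y * q (some y) (some x) := by
    intro ρ hnn hs x
    apply Summable.of_abs
    apply Summable.of_nonneg_of_le (fun y => abs_nonneg _) (fun y => ?_) (hs.mul_right qbar)
    rw [abs_mul, abs_of_nonneg (hnn y)]
    exact mul_le_mul_of_nonneg_left (hQabs y x) (hnn y)
  have hsumq0 : ∀ (ρ : Λ → ℝ), (∀ x, 0 ≤ ρ x) → Summable ρ →
      Summable fun y : Λ => ρ y * q (some y) none := by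
    intro ρ hnn hs
    apply Summable.of_nonneg_of_le (fun y => mul_nonneg (hnn y) (hq0nn y))
      (fun y => mul_le_mul_of_nonneg_left (hq0le y) (hnn y)) (hs.mul_right qbar)
  -- the eigen-equation satisfied by a QSD
  have heig : ∀ (ρ : Λ → ℝ), (∀ x, 0 ≤ ρ x) → HasSum ρ 1 →
      (∀ x : Λ, ∑' y : Λ, ρ y * (q (some y) (some x) + q (some y) none * ρ x) = 0) →
      ∀ x : Λ, ∑' y : Λ, ρ y * q (some y) (some x)
        = -((∑' y : Λ, ρ y * q (some y) none) * ρ x) := by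
    intro ρ hnn hs hqsd x
    have h1 := hsumQ ρ hnn hs.summable x
    have h2 := (hsumq0 ρ hnn hs.summable).mul_right (ρ x)
    have h3 : ∀ y : Λ, ρ y * (q (some y) (some x) + q (some y) none * ρ x)
        = ρ y * q (some y) (some x) + (ρ y * q (some y) none) * ρ x := fun y => by ring
    have h4 := hqsd x
    rw [tsum_congr h3, Summable.tsum_add h1 h2, tsum_mul_right] at h4
    linarith
  -- absorption rates
  set θ : ℝ := ∑' y : Λ, ν y * q (some y) none with hθ_def
  set θ' : ℝ := ∑' y : Λ, ν' y * q (some y) none with hθ'_def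
  have hθnn : 0 ≤ θ := tsum_nonneg fun y => mul_nonneg (hν_nonneg y) (hq0nn y)
  have hθC : θ ≤ C := by
    have h1 : ∀ y : Λ, ν y * q (some y) none ≤ ν y * C :=
      fun y => mul_le_mul_of_nonneg_left (hq0C y) (hν_nonneg y)
    have h2 := Summable.tsum_le_tsum h1 (hsumq0 ν hν_nonneg hν_sum.summable)
      (hν_sum.summable.mul_right C)
    rw [tsum_mul_right, hν_sum.tsum_eq, one_mul] at h2
    exact h2
  have hθ'nn : 0 ≤ θ' := tsum_nonneg fun y => mul_nonneg (hν'_nonneg y) (hq0nn y)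
  have hθ'C : θ' ≤ C := by
    have h1 : ∀ y : Λ, ν' y * q (some y) none ≤ ν' y * C :=
      fun y => mul_le_mul_of_nonneg_left (hq0C y) (hν'_nonneg y)
    have h2 := Summable.tsum_le_tsum h1 (hsumq0 ν' hν'_nonneg hν'_sum.summable)
      (hν'_sum.summable.mul_right C)
    rw [tsum_mul_right, hν'_sum.tsum_eq, one_mul] at h2
    exact h2
  -- the signed difference
  set μ : Λ → ℝ := fun x => ν x - ν' x with hμ_def
  have hμsum : Summable μ := hν_sum.summable.sub hν'_sum.summable
  have hμabs : Summable fun x => |μ x| := hμsum.abs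
  have hμ0 : ∑' x : Λ, μ x = 0 := by
    have h := (hν_sum.sub hν'_sum).tsum_eq
    simpa using h
  set s : Λ → ℝ := fun x => if 0 ≤ μ x then (1 : ℝ) else -1 with hs_def
  have hsμ : ∀ x, s x * μ x = |μ x| := by
    intro x
    by_cases h : 0 ≤ μ x
    · rw [hs_def]; simp only [h, if_true, one_mul]
      rw [abs_of_nonneg h]
    · rw [hs_def]; simp only [h, if_false]
      rw [abs_of_neg (not_le.1 h)]; ring
  have hsabs : ∀ x, |s x| = 1 := by
    intro x
    by_cases h : 0 ≤ μ x <;> simp [hs_def, h]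
  set D : ℝ := ∑' x : Λ, |μ x| with hD_def
  have hD0 : 0 ≤ D := tsum_nonneg fun x => abs_nonneg _
  have hsμsum : Summable fun x => s x * μ x := hμabs.congr fun x => (hsμ x).symm
  have hsνsum : Summable fun x => s x * ν x := by
    apply Summable.of_abs
    exact hν_sum.summable.congr fun x => by
      rw [abs_mul, hsabs, one_mul, abs_of_nonneg (hν_nonneg x)]
  have hsν'sum : Summable fun x => s x * ν' x := by
    apply Summable.of_abs
    exact hν'_sum.summable.congr fun x => by
      rw [abs_mul, hsabs, one_mul, abs_of_nonneg (hν'_nonneg x)]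
  set u : ℝ := ∑' x : Λ, s x * ν x with hu_def
  set u' : ℝ := ∑' x : Λ, s x * ν' x with hu'_def
  have hu'1 : |u'| ≤ 1 := by
    have h1 := norm_tsum_le_tsum_norm (f := fun x => s x * ν' x) ?_
    · rw [Real.norm_eq_abs] at h1
      refine le_trans h1 ?_
      have h2 : ∀ x : Λ, ‖s x * ν' x‖ = ν' x := fun x => by
        rw [Real.norm_eq_abs, abs_mul, hsabs, one_mul, abs_of_nonneg (hν'_nonneg x)]
      rw [tsum_congr h2, hν'_sum.tsum_eq]
    · exact hν'_sum.summable.congr fun x => by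
        rw [Real.norm_eq_abs, abs_mul, hsabs, one_mul, abs_of_nonneg (hν'_nonneg x)]
  have huu' : u - u' = D := by
    rw [hu_def, hu'_def, ← Summable.tsum_sub hsνsum hsν'sum, hD_def]
    exact tsum_congr fun x => by rw [← hsμ x, hμ_def]; ring
  -- J
  set J : ℝ := ∑' y : Λ, |μ y| * q (some y) none with hJ_def
  have hJsum : Summable fun y : Λ => |μ y| * q (some y) none :=
    hsumq0 _ (fun y => abs_nonneg _) hμabs
  have hJ0 : 0 ≤ J := tsum_nonneg fun y => mul_nonneg (abs_nonneg _) (hq0nn y)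
  have hθθ'J : |θ - θ'| ≤ J := by
    have h1 : θ - θ' = ∑' y : Λ, μ y * q (some y) none := by
      rw [hθ_def, hθ'_def, ← Summable.tsum_sub (hsumq0 ν hν_nonneg hν_sum.summable)
        (hsumq0 ν' hν'_nonneg hν'_sum.summable)]
      exact tsum_congr fun y => by rw [hμ_def]; ring
    rw [h1]
    have h2 := norm_tsum_le_tsum_norm (f := fun y : Λ => μ y * q (some y) none) ?_
    · rw [Real.norm_eq_abs] at h2
      refine le_trans h2 ?_
      rw [hJ_def]
      refine le_of_eq (tsum_congr fun y => ?_)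
      rw [Real.norm_eq_abs, abs_mul, abs_of_nonneg (hq0nn y)]
    · exact hJsum.congr fun y => by
        rw [Real.norm_eq_abs, abs_mul, abs_of_nonneg (hq0nn y)]
  -- the comparison matrix
  set lam : ℝ := qbar + α with hlam_def
  set E : Λ → Λ → ℝ :=
    fun y x => (if y = x then lam else 0) + q (some y) (some x) - αf x with hE_def
  have hEnn : ∀ y x : Λ, 0 ≤ E y x := by
    intro y x
    by_cases h : y = x
    · subst h
      have h1 := hrow_eq y
      have h2 := hrow_le y
      have h3 := hαfα y
      have h4 : E y y = lam + q (some y) (some y) - αf y := by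
        simp only [hE_def, eq_self_iff_true, if_true]
      rw [h4, hlam_def]
      linarith
    · simp only [hE_def]
      simp only [if_neg h]
      have := hαfle x y h
      linarith
  -- summability of ite columns/rows
  have hEisum : ∀ (c : Λ → ℝ) (x : Λ), Summable fun y : Λ => c y * (if y = x then lam else 0) := by
    intro c x
    apply Summable.congr ((hasSum_ite_eq x (c x * lam)).summable)
    intro y
    by_cases h : y = x
    · subst h; simp
    · simp [h]
  have hEitsum : ∀ (c : Λ → ℝ) (x : Λ),
      (∑' y : Λ, c y * (if y = x then lam else 0)) = c x * lam := by
    intro c x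
    have e1 : ∀ y : Λ, c y * (if y = x then lam else 0) = (if y = x then c x * lam else 0) := by
      intro y
      by_cases h : y = x
      · subst h; simp
      · simp [h]
    rw [tsum_congr e1]
    exact (hasSum_ite_eq x (c x * lam)).tsum_eq
  have hite_sum : ∀ y : Λ, Summable fun x : Λ => (if y = x then lam else 0) := by
    intro y
    apply Summable.congr ((hasSum_ite_eq y lam).summable)
    intro x
    by_cases h : x = y
    · subst h; simp
    · rw [if_neg h, if_neg (fun hh : y = x => h hh.symm)]
  have hite_tsum : ∀ y : Λ, (∑' x : Λ, if y = x then lam else 0) = lam := by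
    intro y
    have e1 : ∀ x : Λ, (if y = x then lam else 0) = (if x = y then lam else 0) := by
      intro x
      by_cases h : x = y
      · subst h; simp
      · rw [if_neg (fun hh : y = x => h hh.symm), if_neg h]
    rw [tsum_congr e1]
    exact (hasSum_ite_eq y lam).tsum_eq
  -- summability of c ⬝ E columns
  have hEsum : ∀ (c : Λ → ℝ) (x : Λ), Summable c →
      (Summable fun y : Λ => c y * q (some y) (some x)) →
      Summable fun y : Λ => c y * E y x := by
    intro c x hc hcq
    have h1 := ((hEisum c x).add hcq).sub (hc.mul_right (αf x))
    exact h1.congr fun y => by simp only [hE_def]; ring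
  have hμQsum : ∀ x : Λ, Summable fun y : Λ => μ y * q (some y) (some x) := by
    intro x
    apply Summable.of_abs
    apply Summable.of_nonneg_of_le (fun y => abs_nonneg _) (fun y => ?_) (hμabs.mul_right qbar)
    rw [abs_mul]
    exact mul_le_mul_of_nonneg_left (hQabs y x) (abs_nonneg _)
  have hμQtsum : ∀ x : Λ, ∑' y : Λ, μ y * q (some y) (some x) = θ' * ν' x - θ * ν x := by
    intro x
    have e1 : ∀ y : Λ, μ y * q (some y) (some x)
        = ν y * q (some y) (some x) - ν' y * q (some y) (some x) := by
      intro y; rw [hμ_def]; ring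
    rw [tsum_congr e1, Summable.tsum_sub (hsumQ ν hν_nonneg hν_sum.summable x)
      (hsumQ ν' hν'_nonneg hν'_sum.summable x),
      heig ν hν_nonneg hν_sum hν_qsd x, heig ν' hν'_nonneg hν'_sum hν'_qsd x,
      ← hθ_def, ← hθ'_def]
    ring
  have hμEtsum : ∀ x : Λ, ∑' y : Λ, μ y * E y x = μ x * lam + (θ' * ν' x - θ * ν x) := by
    intro x
    have e1 : ∀ y : Λ, μ y * E y x
        = (μ y * (if y = x then lam else 0) + μ y * q (some y) (some x)) - μ y * αf x := by
      intro y; simp only [hE_def]; ring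
    rw [tsum_congr e1, Summable.tsum_sub ((hEisum μ x).add (hμQsum x)) (hμsum.mul_right (αf x)),
      Summable.tsum_add (hEisum μ x) (hμQsum x), hEitsum μ x, hμQtsum x, tsum_mul_right, hμ0,
      zero_mul, sub_zero]
  -- pointwise inequality
  have hptwise : ∀ x : Λ, s x * (lam * μ x - θ * ν x + θ' * ν' x)
      ≤ ∑' y : Λ, |μ y| * E y x := by
    intro x
    have hL : s x * (lam * μ x - θ * ν x + θ' * ν' x) = s x * ∑' y : Λ, μ y * E y x := by
      rw [hμEtsum x]; ring
    rw [hL, ← tsum_mul_left]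
    apply Summable.tsum_le_tsum ?_ ((hEsum μ x hμsum (hμQsum x)).mul_left (s x))
      (hEsum _ x hμabs (hsumQ _ (fun y => abs_nonneg _) hμabs x))
    intro y
    have h1 : s x * (μ y * E y x) = (s x * μ y) * E y x := by ring
    rw [h1]
    apply mul_le_mul_of_nonneg_right ?_ (hEnn y x)
    calc s x * μ y ≤ |s x * μ y| := le_abs_self _
      _ = |μ y| := by rw [abs_mul, hsabs, one_mul]
  -- summation of the left side
  have hLsum : Summable fun x : Λ => s x * (lam * μ x - θ * ν x + θ' * ν' x) :=
    ((((hsμsum.mul_left lam).sub (hsνsum.mul_left θ)).add (hsν'sum.mul_left θ'))).congr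
      fun x => by ring
  have hLtsum : ∑' x : Λ, s x * (lam * μ x - θ * ν x + θ' * ν' x)
      = lam * D - θ * u + θ' * u' := by
    have e1 : ∀ x : Λ, s x * (lam * μ x - θ * ν x + θ' * ν' x)
        = (lam * (s x * μ x) - θ * (s x * ν x)) + θ' * (s x * ν' x) := by
      intro x; ring
    rw [tsum_congr e1,
      Summable.tsum_add ((hsμsum.mul_left lam).sub (hsνsum.mul_left θ)) (hsν'sum.mul_left θ'),
      Summable.tsum_sub (hsμsum.mul_left lam) (hsνsum.mul_left θ),
      tsum_mul_left, tsum_mul_left, tsum_mul_left]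
    have e2 : ∑' x : Λ, s x * μ x = D := by
      rw [hD_def]; exact tsum_congr hsμ
    rw [e2, ← hu_def, ← hu'_def]
  -- summation of the right side, via Fubini
  have hslice : ∀ y : Λ, Summable fun x : Λ => |μ y| * E y x := by
    intro y
    have h2 : Summable fun x : Λ =>
        ((if y = x then lam else 0) + q (some y) (some x)) - αf x :=
      ((hite_sum y).add (hrowΛ_summable y)).sub hαfsum
    exact (h2.mul_left (|μ y|)).congr fun x => by simp only [hE_def]
  have hslicetsum : ∀ y : Λ, ∑' x : Λ, |μ y| * E y x
      = |μ y| * (lam - q (some y) none - α) := by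
    intro y
    rw [tsum_mul_left]
    congr 1
    have e1 : ∀ x : Λ, E y x
        = ((if y = x then lam else 0) + q (some y) (some x)) - αf x := by
      intro x; simp only [hE_def]
    rw [tsum_congr e1, Summable.tsum_sub ((hite_sum y).add (hrowΛ_summable y)) hαfsum,
      Summable.tsum_add (hite_sum y) (hrowΛ_summable y), hite_tsum y, hrowΛ y, hαftsum]
    ring
  have hFnn : 0 ≤ fun p : Λ × Λ => |μ p.1| * E p.1 p.2 :=
    fun p => mul_nonneg (abs_nonneg _) (hEnn _ _)
  have hgsum : Summable fun y : Λ => |μ y| * (lam - q (some y) none - α) := by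
    have h1 : Summable fun y : Λ => (|μ y| * lam - |μ y| * q (some y) none) - |μ y| * α :=
      ((hμabs.mul_right lam).sub hJsum).sub (hμabs.mul_right α)
    exact h1.congr fun y => by ring
  have hFsum : Summable fun p : Λ × Λ => |μ p.1| * E p.1 p.2 := by
    refine (summable_prod_of_nonneg hFnn).2 ⟨fun y => hslice y, ?_⟩
    exact hgsum.congr fun y => (hslicetsum y).symm
  have hWsum : Summable fun x : Λ => ∑' y : Λ, |μ y| * E y x := by
    have h1 : Summable fun p : Λ × Λ => |μ p.2| * E p.2 p.1 := hFsum.prod_symm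
    exact h1.prod
  have hswap : ∑' x : Λ, ∑' y : Λ, |μ y| * E y x
      = ∑' y : Λ, ∑' x : Λ, |μ y| * E y x :=
    Summable.tsum_comm (f := fun y x => |μ y| * E y x) hFsum
  have hWval : ∑' y : Λ, ∑' x : Λ, |μ y| * E y x = lam * D - J - α * D := by
    rw [tsum_congr hslicetsum]
    have e1 : ∀ y : Λ, |μ y| * (lam - q (some y) none - α)
        = (|μ y| * lam - |μ y| * q (some y) none) - |μ y| * α := by
      intro y; ring
    rw [tsum_congr e1, Summable.tsum_sub ((hμabs.mul_right lam).sub hJsum) (hμabs.mul_right α),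
      Summable.tsum_sub (hμabs.mul_right lam) hJsum, tsum_mul_right, tsum_mul_right,
      ← hD_def, ← hJ_def]
    ring
  -- the master inequality
  have hmain := Summable.tsum_le_tsum hptwise hLsum hWsum
  rw [hLtsum, hswap, hWval] at hmain
  have h7 : θ * u - θ' * u' = θ * D + (θ - θ') * u' := by
    rw [← huu']; ring
  have h5 : (θ - θ') * u' ≤ J := by
    calc (θ - θ') * u' ≤ |(θ - θ') * u'| := le_abs_self _
      _ = |θ - θ'| * |u'| := abs_mul _ _
      _ ≤ J * 1 := mul_le_mul hθθ'J hu'1 (abs_nonneg _) hJ0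
      _ = J := mul_one J
  have h6 : θ * D ≤ C * D := mul_le_mul_of_nonneg_right hθC hD0
  have hαD : α * D ≤ C * D := by linarith
  have hDle : D ≤ 0 := by nlinarith
  have hDzero : D = 0 := le_antisymm hDle hD0
  funext x
  have h8 : |μ x| ≤ D := Summable.le_tsum hμabs x fun j _ => abs_nonneg _
  have h9 : |μ x| = 0 := le_antisymm (hDzero ▸ h8) (abs_nonneg _)
  have h10 : μ x = 0 := abs_eq_zero.1 h9
  have h11 : ν x - ν' x = 0 := h10
  linarith
end

section
/- Assume α > C. For N ≥ 2 let π^N be the unique invariant probability measure of the N-particle Fleming–Viot process and ρ^N(x) := ∑_ξ π^N(ξ)·η(ξ,x)/N. Then the family of measures (ρ^N, N ≥ 2) is tight: for every ε > 0 there exists a finite set F ⊂ Λ such that ∑_{x∉F} ρ^N(x) < ε for all N ≥ 2. -/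
/-
Test the stationarity of `π^N` against `f_H(ξ) = #{i | ξ i ∉ H}` for a finite `H ⊆ Λ`. Once `H`
contains a finite `G₀` with `a := ∑_{z ∈ G₀} inf_{x ≠ z} q(x,z) > C`, a particle outside `H` jumps
into `H` at rate at least `a`, while the redistribution after absorptions raises `f_H` at rate at
most `C f_H`. A particle inside `H` leaves it at rate at most `q̄`, and at rate at most `e` if it
sits in a smaller set `G` whose rows have tails at most `e` outside `H`. Stationarity therefore
gives `(a + q̄ - C) m_H ≤ e + q̄ m_G` for the mean fractions `m` of particles outside `H` and `G`,
uniformly in `N`. Since `q̄ / (a + q̄ - C) < 1`, iterating `G ↦ H` pushes `m` below any `ε`.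
-/

open scoped BigOperators Topology

/-- The number of Fleming–Viot particles at site `y` in the configuration `ξ`,
`η(ξ,y) = #{i : ξ(i) = y}`, as a real number. -/
noncomputable def etaCount {Λ : Type*} [DecidableEq Λ] {N : ℕ} (ξ : Fin N → Λ) (y : Λ) : ℝ :=
  ((Finset.univ.filter fun i => ξ i = y).card : ℝ)

/-- The exponential of a bounded operator on a Banach space; used to define the transition
semigroup `S_t = exp (t • L)` of the Fleming–Viot process. -/
noncomputable def opExp {E : Type*} [NormedAddCommGroup E] [NormedSpace ℝ E] [CompleteSpace E]
    (L : E →L[ℝ] E) : E →L[ℝ] E :=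
  letI : IsTopologicalRing (E →L[ℝ] E) := inferInstance
  NormedSpace.exp L

open Finset Filter Function
open scoped BoundedContinuousFunction

lemma exists_finset_lt_sum_of_lt_tsum {β : Type*} {f : β → ℝ} {a : ℝ} (h : a < ∑' x, f x) :
    ∃ s : Finset β, a < ∑ x ∈ s, f x := by
  by_cases hf : Summable f
  · exact (hf.hasSum.eventually (lt_mem_nhds h)).exists
  · exact ⟨∅, by simpa [tsum_eq_zero_of_not_summable hf] using h⟩

lemma exists_superset_tsum_compl_lt {Λ : Type*} (f : Λ → Λ → ℝ) (G : Finset Λ) {δ : ℝ}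
    (hδ : 0 < δ) : ∃ H : Finset Λ, G ⊆ H ∧ ∀ x ∈ G, ∑' y : {y // y ∉ H}, f x y < δ :=
  ((eventually_ge_atTop G).and <| (eventually_all_finset G).2 fun x _ =>
    (tendsto_tsum_compl_atTop_zero (f x)).eventually (gt_mem_nhds hδ)).exists

lemma summable_mul_of_abs_le {X : Type*} {π f : X → ℝ} (hπ : Summable π) (hπ0 : ∀ x, 0 ≤ π x)
    {B : ℝ} (hf : ∀ x, |f x| ≤ B) : Summable fun x => π x * f x :=
  (hπ.mul_right B).of_norm_bounded fun x => by
    rw [Real.norm_eq_abs, abs_mul, abs_of_nonneg (hπ0 x)]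
    exact mul_le_mul_of_nonneg_left (hf x) (hπ0 x)

lemma mul_tsum_le_of_tsum_mul_eq_zero {X : Type*} {π : X → ℝ} (hπ0 : ∀ x, 0 ≤ π x)
    (hπ : HasSum π 1) {F u v : X → ℝ} {A B D : ℝ} (hF : ∀ x, |F x| ≤ A) (hu : ∀ x, |u x| ≤ B)
    (hv : ∀ x, |v x| ≤ D) (hF0 : ∑' x, π x * F x = 0) {κ c l : ℝ}
    (h : ∀ x, F x + κ * u x ≤ c + l * v x) :
    κ * ∑' x, π x * u x ≤ c + l * ∑' x, π x * v x := by
  have hsF := summable_mul_of_abs_le hπ.summable hπ0 hF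
  have hsu := summable_mul_of_abs_le hπ.summable hπ0 hu
  have hsv := summable_mul_of_abs_le hπ.summable hπ0 hv
  have hle : ∑' x, (π x * F x + κ * (π x * u x)) ≤ ∑' x, (c * π x + l * (π x * v x)) :=
    (hsF.add (hsu.mul_left κ)).tsum_le_tsum
      (fun x => by nlinarith [h x, hπ0 x]) ((hπ.summable.mul_left c).add (hsv.mul_left l))
  rwa [hsF.tsum_add (hsu.mul_left κ), (hπ.summable.mul_left c).tsum_add (hsv.mul_left l),
    tsum_mul_left, tsum_mul_left, tsum_mul_left, hπ.tsum_eq, hF0, zero_add, mul_one] at hle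

lemma exists_forall_lt_of_contraction {ι T : Type*} {P : T → Prop} {m : ι → T → ℝ} {r : ℝ}
    (hr0 : 0 ≤ r) (hr1 : r < 1) {i₀ : ι} (h₀ : ∀ t, P t → m i₀ t ≤ 1)
    (hstep : ∀ e > 0, ∀ i, ∃ j, ∀ t, P t → m j t ≤ e + r * m i t) {ε : ℝ} (hε : 0 < ε) :
    ∃ i, ∀ t, P t → m i t < ε := by
  have hiter : ∀ k : ℕ, ∃ i, ∀ t, P t → m i t ≤ r ^ k + ε / 2 := by
    intro k
    induction k with
    | zero => exact ⟨i₀, fun t ht => by linarith [h₀ t ht]⟩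
    | succ k ih =>
      obtain ⟨i, hi⟩ := ih
      obtain ⟨j, hj⟩ := hstep (ε * (1 - r) / 2) (by nlinarith) i
      refine ⟨j, fun t ht => (hj t ht).trans ?_⟩
      calc ε * (1 - r) / 2 + r * m i t ≤ ε * (1 - r) / 2 + r * (r ^ k + ε / 2) := by
            gcongr; exact hi t ht
        _ = r ^ (k + 1) + ε / 2 := by ring
  obtain ⟨k, hk⟩ := exists_pow_lt_of_lt_one (half_pos hε) hr1
  obtain ⟨i, hi⟩ := hiter k
  exact ⟨i, fun t ht => by linarith [hi t ht]⟩

lemma sum_div_mul_sum_sub_le {N : ℕ} (hN : 2 ≤ N) {a v : Fin N → ℝ} {C : ℝ}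
    (ha : ∀ i, 0 ≤ a i) (haC : ∀ i, a i ≤ C) (hv : ∀ i, 0 ≤ v i) :
    ∑ i, a i / ((N : ℝ) - 1) * (∑ j, v j - N * v i) ≤ C * ∑ j, v j := by
  have hN1 : (0 : ℝ) < N - 1 := by
    have : (2 : ℝ) ≤ N := by exact_mod_cast hN
    linarith
  calc ∑ i, a i / ((N : ℝ) - 1) * (∑ j, v j - N * v i)
      ≤ ∑ i, C / ((N : ℝ) - 1) * (∑ j, v j - v i) := by
        refine sum_le_sum fun i _ => ?_
        have hvS : v i ≤ ∑ j, v j := single_le_sum (fun j _ => hv j) (mem_univ i)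
        calc a i / ((N : ℝ) - 1) * (∑ j, v j - N * v i)
            ≤ a i / ((N : ℝ) - 1) * (∑ j, v j - v i) := by
              gcongr
              · exact div_nonneg (ha i) hN1.le
              · nlinarith [hv i]
          _ ≤ C / ((N : ℝ) - 1) * (∑ j, v j - v i) := by
              gcongr
              exact haC i
    _ = C * ∑ j, v j := by
        rw [← mul_sum, sum_sub_distrib, sum_const, card_univ, Fintype.card_fin, nsmul_eq_mul]
        field_simp

lemma sum_update_sub_sum {Λ : Type*} {N : ℕ} (g : Λ → ℝ) (ξ : Fin N → Λ) (i : Fin N) (y : Λ) :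
    ∑ j, g (update ξ i y j) - ∑ j, g (ξ j) = g y - g (ξ i) := by
  rw [← add_sum_erase _ _ (mem_univ i), ← add_sum_erase _ _ (mem_univ i), update_self,
    sum_congr rfl fun j hj => by rw [update_of_ne (ne_of_mem_erase hj)]]
  ring

section RateMatrix

variable {Λ : Type*} {q : Option Λ → Option Λ → ℝ}

lemma summable_rate_row
    (hq_summable : ∀ x, Summable (fun y : {y : Option Λ // y ≠ x} => q x (y : Option Λ)))
    (x : Λ) : Summable fun y : Λ => q (some x) (some y) := by
  refine (Set.finite_singleton x).summable_compl_iff.mp ?_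
  exact (hq_summable (some x)).comp_injective (i := fun y : ({x}ᶜ : Set Λ) =>
      ⟨some y.1, fun h => y.2 (Option.some_injective _ h)⟩)
    fun a b hab => Subtype.ext (Option.some_injective _ (congrArg Subtype.val hab))

lemma rate_absorb_le (hq_nonneg : ∀ x y, x ≠ y → 0 ≤ q x y)
    (hq_summable : ∀ x, Summable (fun y : {y : Option Λ // y ≠ x} => q x (y : Option Λ)))
    {qbar : ℝ} (hqbar : ∀ x, (∑' y : {y : Option Λ // y ≠ x}, q x (y : Option Λ)) ≤ qbar)
    (x : Λ) : q (some x) none ≤ qbar :=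
  ((hq_summable (some x)).le_tsum ⟨none, by simp⟩ fun z _ => hq_nonneg _ _ z.2.symm).trans
    (hqbar _)

lemma tsum_rate_compl_le (hq_nonneg : ∀ x y, x ≠ y → 0 ≤ q x y)
    (hq_summable : ∀ x, Summable (fun y : {y : Option Λ // y ≠ x} => q x (y : Option Λ)))
    {qbar : ℝ} (hqbar : ∀ x, (∑' y : {y : Option Λ // y ≠ x}, q x (y : Option Λ)) ≤ qbar)
    {H : Finset Λ} {x : Λ} (hx : x ∈ H) :
    ∑' y : {y // y ∉ H}, q (some x) (some y) ≤ qbar := by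
  have hi : Injective fun y : {y // y ∉ H} =>
      (⟨some y.1, fun h => y.2 (Option.some_injective _ h ▸ hx)⟩ : {z : Option Λ // z ≠ some x}) :=
    fun a b hab => Subtype.ext (Option.some_injective _ (congrArg Subtype.val hab))
  exact (tsum_comp_le_tsum_of_inj (hq_summable (some x)) (fun z => hq_nonneg _ _ z.2.symm) hi).trans
    (hqbar _)

lemma iInf_rate_le (hq_nonneg : ∀ x y, x ≠ y → 0 ≤ q x y) {x z : Λ} (h : x ≠ z) :
    ⨅ w : {w : Λ // w ≠ z}, q (some w) (some z) ≤ q (some x) (some z) :=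
  ciInf_le ⟨0, by rintro _ ⟨w, rfl⟩; exact hq_nonneg _ _ (by simpa using w.2)⟩
    (⟨x, h⟩ : {w : Λ // w ≠ z})

lemma sum_iInf_rate_le_sum (hq_nonneg : ∀ x y, x ≠ y → 0 ≤ q x y)
    {G₀ H : Finset Λ} (hG₀H : G₀ ⊆ H) {x : Λ} (hx : x ∉ H) :
    ∑ z ∈ G₀, ⨅ w : {w : Λ // w ≠ z}, q (some w) (some z) ≤ ∑ y ∈ H, q (some x) (some y) :=
  calc ∑ z ∈ G₀, ⨅ w : {w : Λ // w ≠ z}, q (some w) (some z)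
      ≤ ∑ y ∈ G₀, q (some x) (some y) :=
        sum_le_sum fun _ hz => iInf_rate_le hq_nonneg fun h => hx (h ▸ hG₀H hz)
    _ ≤ ∑ y ∈ H, q (some x) (some y) :=
        sum_le_sum_of_subset_of_nonneg hG₀H fun _ hy _ =>
          hq_nonneg _ _ fun h => hx (Option.some_injective _ h ▸ hy)

-- The diagonal term `y = x` contributes nothing, whatever the value of `q x x`.
noncomputable def drift (q : Option Λ → Option Λ → ℝ) (g : Λ → ℝ) (x : Λ) : ℝ :=
  ∑' y, q (some x) (some y) * (g y - g x)

lemma summable_rate_mul_sub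
    (hq_summable : ∀ x, Summable (fun y : {y : Option Λ // y ≠ x} => q x (y : Option Λ)))
    {g : Λ → ℝ} {B : ℝ} (hg : ∀ y, |g y| ≤ B) (x : Λ) :
    Summable fun y => q (some x) (some y) * (g y - g x) :=
  ((summable_rate_row hq_summable x).abs.mul_right (2 * B)).of_norm_bounded fun y => by
    rw [Real.norm_eq_abs, abs_mul]
    gcongr
    linarith [abs_sub (g y) (g x), hg y, hg x]

end RateMatrix

section Particles

variable {Λ : Type*} [DecidableEq Λ] {N : ℕ}

lemma etaCount_nonneg (ξ : Fin N → Λ) (y : Λ) : 0 ≤ etaCount ξ y := Nat.cast_nonneg _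

lemma etaCount_le (ξ : Fin N → Λ) (y : Λ) : etaCount ξ y ≤ N := by
  simpa [etaCount] using card_filter_le univ fun i => ξ i = y

lemma hasSum_etaCount_mul (ξ : Fin N → Λ) (h : Λ → ℝ) :
    HasSum (fun y => etaCount ξ y * h y) (∑ i, h (ξ i)) := by
  have hη : ∀ y, etaCount ξ y * h y = ∑ i, if ξ i = y then h y else 0 := fun y => by
    simp only [etaCount, card_filter, Nat.cast_sum, Nat.cast_ite, Nat.cast_one, Nat.cast_zero,
      sum_mul, ite_mul, one_mul, zero_mul]
  simp_rw [hη]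
  refine hasSum_sum fun i _ => ?_
  simpa using hasSum_single (f := fun y => if ξ i = y then h y else 0) (ξ i)
    fun y hy => if_neg (Ne.symm hy)

def outsideIndicator (H : Finset Λ) (y : Λ) : ℝ := if y ∈ H then 0 else 1

def numOutside (H : Finset Λ) (ξ : Fin N → Λ) : ℝ := ∑ i, outsideIndicator H (ξ i)

lemma outsideIndicator_nonneg (H : Finset Λ) (y : Λ) : 0 ≤ outsideIndicator H y := by
  unfold outsideIndicator; split_ifs <;> simp

lemma abs_outsideIndicator_le (H : Finset Λ) (y : Λ) : |outsideIndicator H y| ≤ 1 := by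
  unfold outsideIndicator; split_ifs <;> simp

lemma numOutside_nonneg (H : Finset Λ) (ξ : Fin N → Λ) : 0 ≤ numOutside H ξ :=
  sum_nonneg fun i _ => outsideIndicator_nonneg H (ξ i)

lemma numOutside_le (H : Finset Λ) (ξ : Fin N → Λ) : numOutside H ξ ≤ N :=
  (sum_le_sum fun i _ => (le_abs_self _).trans (abs_outsideIndicator_le H (ξ i))).trans (by simp)

lemma abs_numOutside_le (H : Finset Λ) (ξ : Fin N → Λ) : |numOutside H ξ| ≤ N :=
  abs_le.2 ⟨by linarith [numOutside_nonneg H ξ, (N.cast_nonneg : (0 : ℝ) ≤ N)],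
    numOutside_le H ξ⟩

lemma tsum_compl_etaCount (ξ : Fin N → Λ) (G : Finset Λ) :
    ∑' x : {x // x ∉ G}, etaCount ξ x = numOutside G ξ := by
  refine (tsum_subtype {x | x ∉ G} (etaCount ξ)).trans ?_
  rw [numOutside, ← (hasSum_etaCount_mul ξ (outsideIndicator G)).tsum_eq]
  refine tsum_congr fun x => ?_
  by_cases hx : x ∈ G <;> simp [outsideIndicator, hx]

lemma tsum_compl_tsum_mul_etaCount {N : ℕ} {π : (Fin N → Λ) → ℝ} (hπ0 : ∀ ξ, 0 ≤ π ξ)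
    (hπ : Summable π) (G : Finset Λ) :
    ∑' x : {x // x ∉ G}, ∑' ξ, π ξ * etaCount ξ x = ∑' ξ, π ξ * numOutside G ξ := by
  have hrow : ∀ ξ : Fin N → Λ, Summable fun x : {x // x ∉ G} => π ξ * etaCount ξ x := fun ξ =>
    ((by simpa using (hasSum_etaCount_mul ξ fun _ => 1).summable : Summable (etaCount ξ)).subtype
      _).mul_left (π ξ)
  have hrowsum : ∀ ξ, ∑' x : {x // x ∉ G}, π ξ * etaCount ξ x = π ξ * numOutside G ξ :=
    fun ξ => by rw [tsum_mul_left, tsum_compl_etaCount]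
  have hcol : ∀ x : {x // x ∉ G}, Summable fun ξ => π ξ * etaCount ξ x := fun x =>
    summable_mul_of_abs_le hπ hπ0 fun ξ => by
      rw [abs_of_nonneg (etaCount_nonneg ξ x)]; exact etaCount_le ξ x
  have hprod : Summable (uncurry fun ξ (x : {x // x ∉ G}) => π ξ * etaCount ξ x) := by
    refine (summable_prod_of_nonneg fun p => mul_nonneg (hπ0 p.1) (etaCount_nonneg _ _)).2
      ⟨hrow, ?_⟩
    simp_rw [hrowsum]
    exact summable_mul_of_abs_le hπ hπ0 (abs_numOutside_le G)
  rw [hprod.tsum_comm' hrow hcol]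
  exact tsum_congr hrowsum

lemma tsum_mul_numOutside_div_le_one {N : ℕ} {π : (Fin N → Λ) → ℝ} (hπ0 : ∀ ξ, 0 ≤ π ξ)
    (hπ : HasSum π 1) (G : Finset Λ) : (∑' ξ, π ξ * numOutside G ξ) / N ≤ 1 := by
  refine div_le_one_of_le₀ ?_ N.cast_nonneg
  calc ∑' ξ, π ξ * numOutside G ξ ≤ ∑' ξ, π ξ * N :=
        (summable_mul_of_abs_le hπ.summable hπ0 (abs_numOutside_le G)).tsum_le_tsum
          (fun ξ => mul_le_mul_of_nonneg_left (numOutside_le G ξ) (hπ0 ξ))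
          (hπ.summable.mul_right _)
    _ = N := by rw [tsum_mul_right, hπ.tsum_eq, one_mul]

end Particles

section Generator

variable {Λ : Type*} [DecidableEq Λ] {q : Option Λ → Option Λ → ℝ} {N : ℕ}

noncomputable def fvGenerator (q : Option Λ → Option Λ → ℝ) {N : ℕ} (f : (Fin N → Λ) → ℝ)
    (ξ : Fin N → Λ) : ℝ :=
  ∑ i : Fin N, ∑' y : {y : Λ // y ≠ ξ i},
    (q (some (ξ i)) (some (y : Λ)) + q (some (ξ i)) none * etaCount ξ (y : Λ) / ((N : ℝ) - 1))
      * (f (Function.update ξ i (y : Λ)) - f ξ)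

lemma fvGenerator_sum_comp
    (hq_summable : ∀ x, Summable (fun y : {y : Option Λ // y ≠ x} => q x (y : Option Λ)))
    {g : Λ → ℝ} {B : ℝ} (hg : ∀ y, |g y| ≤ B) (ξ : Fin N → Λ) :
    fvGenerator q (fun ζ => ∑ j, g (ζ j)) ξ
      = ∑ i, (drift q g (ξ i)
          + q (some (ξ i)) none / ((N : ℝ) - 1) * (∑ j, g (ξ j) - N * g (ξ i))) := by
  refine sum_congr rfl fun i _ => ?_
  simp only [sum_update_sub_sum]
  set x := ξ i
  have hsupp : support (fun y => (q (some x) (some y)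
      + q (some x) none * etaCount ξ y / ((N : ℝ) - 1)) * (g y - g x)) ⊆ {y | y ≠ x} :=
    fun y hy hyx => hy (by simp [show y = x from hyx])
  have hsplit : ∀ y, (q (some x) (some y) + q (some x) none * etaCount ξ y / ((N : ℝ) - 1))
      * (g y - g x) = q (some x) (some y) * (g y - g x)
        + q (some x) none / ((N : ℝ) - 1) * (etaCount ξ y * (g y - g x)) := fun y => by ring
  have hη := hasSum_etaCount_mul ξ fun y => g y - g x
  refine (tsum_subtype_eq_of_support_subset hsupp).trans ?_
  rw [tsum_congr hsplit, (summable_rate_mul_sub hq_summable hg x).tsum_add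
    (hη.summable.mul_left _), tsum_mul_left, hη.tsum_eq, sum_sub_distrib, sum_const, card_univ,
    Fintype.card_fin, nsmul_eq_mul, drift]

lemma drift_outsideIndicator_of_mem {H : Finset Λ} {x : Λ} (hx : x ∈ H) :
    drift q (outsideIndicator H) x = ∑' y : {y // y ∉ H}, q (some x) (some y) := by
  refine Eq.trans ?_ (tsum_subtype {y | y ∉ H} fun y => q (some x) (some y)).symm
  refine tsum_congr fun y => ?_
  by_cases hy : y ∈ H <;> simp [outsideIndicator, hx, hy]

lemma drift_outsideIndicator_of_not_mem {H : Finset Λ} {x : Λ} (hx : x ∉ H) :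
    drift q (outsideIndicator H) x = -∑ y ∈ H, q (some x) (some y) := by
  rw [drift, tsum_eq_sum (s := H) fun y hy => by simp [outsideIndicator, hx, hy], ← sum_neg_distrib]
  exact sum_congr rfl fun y hy => by simp [outsideIndicator, hx, hy]

lemma drift_outsideIndicator_add_le (hq_nonneg : ∀ x y, x ≠ y → 0 ≤ q x y)
    (hq_summable : ∀ x, Summable (fun y : {y : Option Λ // y ≠ x} => q x (y : Option Λ)))
    {qbar : ℝ} (hqbar : ∀ x, (∑' y : {y : Option Λ // y ≠ x}, q x (y : Option Λ)) ≤ qbar)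
    {G H : Finset Λ} (hGH : G ⊆ H) {a e : ℝ} (he : 0 ≤ e)
    (hin : ∀ x ∉ H, a ≤ ∑ y ∈ H, q (some x) (some y))
    (htail : ∀ x ∈ G, ∑' y : {y // y ∉ H}, q (some x) (some y) ≤ e) (x : Λ) :
    drift q (outsideIndicator H) x + (a + qbar) * outsideIndicator H x
      ≤ e + qbar * outsideIndicator G x := by
  by_cases hxH : x ∈ H
  · rw [drift_outsideIndicator_of_mem hxH]
    by_cases hxG : x ∈ G
    · simpa [outsideIndicator, hxH, hxG] using htail x hxG
    · have := tsum_rate_compl_le hq_nonneg hq_summable hqbar hxH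
      simp only [outsideIndicator, hxH, hxG, if_true, if_false]
      linarith
  · have hxG : x ∉ G := fun h => hxH (hGH h)
    rw [drift_outsideIndicator_of_not_mem hxH]
    simp only [outsideIndicator, hxH, hxG, if_false]
    linarith [hin x hxH]

lemma fvGenerator_numOutside_add_le (hq_nonneg : ∀ x y, x ≠ y → 0 ≤ q x y)
    (hq_summable : ∀ x, Summable (fun y : {y : Option Λ // y ≠ x} => q x (y : Option Λ)))
    {qbar : ℝ} (hqbar : ∀ x, (∑' y : {y : Option Λ // y ≠ x}, q x (y : Option Λ)) ≤ qbar)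
    {C : ℝ} (hqC : ∀ x : Λ, q (some x) none ≤ C) {N : ℕ} (hN : 2 ≤ N)
    {G H : Finset Λ} (hGH : G ⊆ H) {a e : ℝ} (he : 0 ≤ e)
    (hin : ∀ x ∉ H, a ≤ ∑ y ∈ H, q (some x) (some y))
    (htail : ∀ x ∈ G, ∑' y : {y // y ∉ H}, q (some x) (some y) ≤ e) (ξ : Fin N → Λ) :
    fvGenerator q (numOutside H) ξ + (a + qbar - C) * numOutside H ξ
      ≤ e * N + qbar * numOutside G ξ := by
  have habs := sum_div_mul_sum_sub_le hN (a := fun i => q (some (ξ i)) none) (C := C)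
    (v := fun i => outsideIndicator H (ξ i)) (fun i => hq_nonneg _ _ (by simp)) (fun i => hqC _)
    (fun i => outsideIndicator_nonneg H (ξ i))
  have hdrift := fun i =>
    drift_outsideIndicator_add_le hq_nonneg hq_summable hqbar hGH he hin htail (ξ i)
  unfold numOutside
  rw [fvGenerator_sum_comp hq_summable (abs_outsideIndicator_le H) ξ]
  calc ∑ i, (drift q (outsideIndicator H) (ξ i) + q (some (ξ i)) none / ((N : ℝ) - 1)
          * (∑ j, outsideIndicator H (ξ j) - N * outsideIndicator H (ξ i)))
        + (a + qbar - C) * ∑ i, outsideIndicator H (ξ i)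
      = ∑ i, (drift q (outsideIndicator H) (ξ i) + (a + qbar) * outsideIndicator H (ξ i))
        + (∑ i, q (some (ξ i)) none / ((N : ℝ) - 1)
          * (∑ j, outsideIndicator H (ξ j) - N * outsideIndicator H (ξ i))
          - C * ∑ i, outsideIndicator H (ξ i)) := by
        simp only [sum_add_distrib, ← mul_sum]; ring
    _ ≤ ∑ i, (e + qbar * outsideIndicator G (ξ i)) + 0 :=
        add_le_add (sum_le_sum fun i _ => hdrift i) (sub_nonpos.2 habs)
    _ = e * N + qbar * ∑ i, outsideIndicator G (ξ i) := by
        simp [sum_add_distrib, ← mul_sum, mul_comm]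

end Generator

section Stationary

variable {Λ : Type*} [DecidableEq Λ] [TopologicalSpace Λ] {q : Option Λ → Option Λ → ℝ}

lemma stationary_numOutside_le (hq_nonneg : ∀ x y, x ≠ y → 0 ≤ q x y)
    (hq_summable : ∀ x, Summable (fun y : {y : Option Λ // y ≠ x} => q x (y : Option Λ)))
    {qbar : ℝ} (hqbar : ∀ x, (∑' y : {y : Option Λ // y ≠ x}, q x (y : Option Λ)) ≤ qbar)
    {C : ℝ} (hqC : ∀ x : Λ, q (some x) none ≤ C) {N : ℕ} (hN : 2 ≤ N)
    {π : (Fin N → Λ) → ℝ} (hπ0 : ∀ ξ, 0 ≤ π ξ) (hπ : HasSum π 1) {G H : Finset Λ}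
    {F : (Fin N → Λ) →ᵇ ℝ} (hF : ∀ ξ, F ξ = fvGenerator q (numOutside H) ξ)
    (hF0 : ∑' ξ, π ξ * F ξ = 0) (hGH : G ⊆ H) {a e : ℝ} (he : 0 ≤ e)
    (hin : ∀ x ∉ H, a ≤ ∑ y ∈ H, q (some x) (some y))
    (htail : ∀ x ∈ G, ∑' y : {y // y ∉ H}, q (some x) (some y) ≤ e) :
    (a + qbar - C) * ∑' ξ, π ξ * numOutside H ξ ≤ e * N + qbar * ∑' ξ, π ξ * numOutside G ξ :=
  mul_tsum_le_of_tsum_mul_eq_zero hπ0 hπ (fun ξ => (Real.norm_eq_abs _).ge.trans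
    (F.norm_coe_le_norm ξ)) (abs_numOutside_le H) (abs_numOutside_le G) hF0 fun ξ =>
    hF ξ ▸ fvGenerator_numOutside_add_le hq_nonneg hq_summable hqbar hqC hN hGH he hin htail ξ

variable [DiscreteTopology Λ]

noncomputable def numOutsideBCF (N : ℕ) (H : Finset Λ) : (Fin N → Λ) →ᵇ ℝ :=
  BoundedContinuousFunction.mkOfDiscrete (numOutside H) N fun ξ ζ => by
    rw [Real.dist_eq]
    exact abs_sub_le_of_nonneg_of_le (numOutside_nonneg H ξ) (numOutside_le H ξ)
      (numOutside_nonneg H ζ) (numOutside_le H ζ)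

lemma exists_stationary_contraction_step (hq_nonneg : ∀ x y, x ≠ y → 0 ≤ q x y)
    (hq_summable : ∀ x, Summable (fun y : {y : Option Λ // y ≠ x} => q x (y : Option Λ)))
    {qbar : ℝ} (hqbar : ∀ x, (∑' y : {y : Option Λ // y ≠ x}, q x (y : Option Λ)) ≤ qbar)
    {C : ℝ} (hqC : ∀ x : Λ, q (some x) none ≤ C)
    (L : (N : ℕ) → ((Fin N → Λ) →ᵇ ℝ) → (Fin N → Λ) →ᵇ ℝ)
    (hL : ∀ N, 2 ≤ N → ∀ f ξ, L N f ξ = fvGenerator q f ξ)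
    (π : (N : ℕ) → (Fin N → Λ) → ℝ) (hπ_nonneg : ∀ N, 2 ≤ N → ∀ ξ, 0 ≤ π N ξ)
    (hπ_sum : ∀ N, 2 ≤ N → HasSum (π N) 1)
    (hπ_inv : ∀ N, 2 ≤ N → ∀ f, ∑' ξ, π N ξ * L N f ξ = 0)
    {G₀ : Finset Λ} {a : ℝ} (hG₀ : ∀ H, G₀ ⊆ H → ∀ x ∉ H, a ≤ ∑ y ∈ H, q (some x) (some y))
    (hκ : 0 < a + qbar - C) {e : ℝ} (he : 0 < e) (G : Finset Λ) :
    ∃ H : Finset Λ, ∀ N, 2 ≤ N → (∑' ξ, π N ξ * numOutside H ξ) / N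
      ≤ e + qbar / (a + qbar - C) * ((∑' ξ, π N ξ * numOutside G ξ) / N) := by
  obtain ⟨H, hGH, htail⟩ :=
    exists_superset_tsum_compl_lt (fun x y => q (some x) (some y)) (G ∪ G₀) (mul_pos he hκ)
  refine ⟨H, fun N hN => ?_⟩
  have hN0 : (0 : ℝ) < N := by positivity
  have key := stationary_numOutside_le hq_nonneg hq_summable hqbar hqC hN (hπ_nonneg N hN)
    (hπ_sum N hN) (F := L N (numOutsideBCF N H)) (hL N hN _) (hπ_inv N hN _)
    (subset_union_left.trans hGH) (mul_pos he hκ).le (hG₀ H (subset_union_right.trans hGH))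
    fun x hx => (htail x (mem_union_left _ hx)).le
  rw [div_le_iff₀ hN0]
  field_simp
  linarith

end Stationary

theorem fv_stationary_tightness_general
    {Λ : Type*} [Nonempty Λ] [DecidableEq Λ]
    [TopologicalSpace Λ] [DiscreteTopology Λ]
    -- the rate matrix Q on Λ ∪ {0} (`none` is the absorbing state 0)
    (q : Option Λ → Option Λ → ℝ)
    (hq_nonneg : ∀ x y, x ≠ y → 0 ≤ q x y)
    (hq_summable : ∀ x, Summable (fun y : {y : Option Λ // y ≠ x} => q x (y : Option Λ)))
    (qbar : ℝ)
    (hqbar : ∀ x, (∑' y : {y : Option Λ // y ≠ x}, q x (y : Option Λ)) ≤ qbar)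
    -- ergodicity coefficient and maximal absorption rate
    (α C : ℝ)
    (hα : α = ∑' z : Λ, ⨅ x : {x : Λ // x ≠ z}, q (some (x : Λ)) (some z))
    (hC : C = ⨆ x : Λ, q (some x) none)
    (hαC : C < α)
    -- the generators of the Fleming–Viot processes with N particles, bounded linear
    -- operators on the bounded (continuous, for the discrete topology) functions
    (L : (N : ℕ) →
      BoundedContinuousFunction (Fin N → Λ) ℝ →L[ℝ] BoundedContinuousFunction (Fin N → Λ) ℝ)
    (hL : ∀ (N : ℕ), 2 ≤ N →
      ∀ (f : BoundedContinuousFunction (Fin N → Λ) ℝ) (ξ : Fin N → Λ),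
      L N f ξ = ∑ i : Fin N, ∑' y : {y : Λ // y ≠ ξ i},
        (q (some (ξ i)) (some (y : Λ))
            + q (some (ξ i)) none * etaCount ξ (y : Λ) / ((N : ℝ) - 1))
          * (f (Function.update ξ i (y : Λ)) - f ξ))
    -- π^N is the (unique) invariant probability measure of the N-particle FV process
    (π : (N : ℕ) → (Fin N → Λ) → ℝ)
    (hπ_nonneg : ∀ N, 2 ≤ N → ∀ ξ, 0 ≤ π N ξ)
    (hπ_sum : ∀ N, 2 ≤ N → HasSum (π N) 1)
    (hπ_inv : ∀ N, 2 ≤ N → ∀ f : BoundedContinuousFunction (Fin N → Λ) ℝ,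
      ∑' ξ : Fin N → Λ, π N ξ * L N f ξ = 0) :
    ∀ ε : ℝ, 0 < ε → ∃ G : Finset Λ, ∀ N : ℕ, 2 ≤ N →
      (∑' x : {x : Λ // x ∉ G},
        (∑' ξ : Fin N → Λ, π N ξ * etaCount ξ (x : Λ)) / N) < ε := by
  intro ε hε
  obtain ⟨x₀⟩ := ‹Nonempty Λ›
  have hqbar0 : 0 ≤ qbar :=
    (hq_nonneg _ _ (Option.some_ne_none x₀)).trans (rate_absorb_le hq_nonneg hq_summable hqbar x₀)
  have hqC : ∀ x : Λ, q (some x) none ≤ C := fun x =>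
    hC ▸ le_ciSup ⟨qbar, by rintro _ ⟨y, rfl⟩; exact rate_absorb_le hq_nonneg hq_summable hqbar y⟩ x
  obtain ⟨G₀, hG₀⟩ := exists_finset_lt_sum_of_lt_tsum (hα ▸ hαC)
  obtain ⟨G, hG⟩ := exists_forall_lt_of_contraction
    (m := fun G N => (∑' ξ, π N ξ * numOutside G ξ) / N) (i₀ := ∅)
    (div_nonneg hqbar0 (by linarith)) ((div_lt_one (by linarith)).2 (by linarith))
    (fun N hN => tsum_mul_numOutside_div_le_one (hπ_nonneg N hN) (hπ_sum N hN) ∅)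
    (fun e he G => exists_stationary_contraction_step hq_nonneg hq_summable hqbar hqC
      (fun N => L N) hL π hπ_nonneg hπ_sum hπ_inv
      (fun H hH x hx => sum_iInf_rate_le_sum hq_nonneg hH hx) (by linarith) he G) hε
  refine ⟨G, fun N hN => ?_⟩
  rw [tsum_div_const, tsum_compl_tsum_mul_etaCount (hπ_nonneg N hN) (hπ_sum N hN).summable]
  exact hG N hN

/-- under `α > C`, the family `(ρ^N, N ≥ 2)` of stationary mean empirical
measures of the Fleming–Viot processes is tight. -/
theorem fv_stationary_tightness
    {Λ : Type*} [Countable Λ] [Nonempty Λ] [DecidableEq Λ]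
    [TopologicalSpace Λ] [DiscreteTopology Λ]
    -- the rate matrix Q on Λ ∪ {0} (`none` is the absorbing state 0)
    (q : Option Λ → Option Λ → ℝ)
    (hq_nonneg : ∀ x y, x ≠ y → 0 ≤ q x y)
    (hq_absorb : ∀ y, q none y = 0)
    (hq_summable : ∀ x, Summable (fun y : {y : Option Λ // y ≠ x} => q x (y : Option Λ)))
    (hq_diag : ∀ x, q x x = -∑' y : {y : Option Λ // y ≠ x}, q x (y : Option Λ))
    (qbar : ℝ)
    (hqbar : ∀ x, (∑' y : {y : Option Λ // y ≠ x}, q x (y : Option Λ)) ≤ qbar)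
    -- ergodicity coefficient and maximal absorption rate
    (α C : ℝ)
    (hα : α = ∑' z : Λ, ⨅ x : {x : Λ // x ≠ z}, q (some (x : Λ)) (some z))
    (hC : C = ⨆ x : Λ, q (some x) none)
    (hαC : C < α)
    -- the transition semigroup P of Q
    (P : ℝ → Option Λ → Option Λ → ℝ)
    (hP_nonneg : ∀ t, 0 ≤ t → ∀ x y, 0 ≤ P t x y)
    (hP_rowsum : ∀ t, 0 ≤ t → ∀ x, HasSum (P t x) 1)
    (hP_zero : ∀ x y, P 0 x y = if x = y then 1 else 0)
    (hP_CK : ∀ s t, 0 ≤ s → 0 ≤ t → ∀ x y,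
      P (t + s) x y = ∑' z : Option Λ, P t x z * P s z y)
    (hP_forward : ∀ t, 0 < t → ∀ z : Λ, ∀ x : Option Λ,
      HasDerivAt (fun s => P s (some z) x)
        (∑' y : Λ, P t (some z) (some y) * q (some y) x) t)
    (hP_meas : ∀ z x, Measurable (fun t => P t z x))
    -- the generators of the Fleming–Viot processes with N particles, bounded linear
    -- operators on the bounded (continuous, for the discrete topology) functions
    (L : (N : ℕ) →
      BoundedContinuousFunction (Fin N → Λ) ℝ →L[ℝ] BoundedContinuousFunction (Fin N → Λ) ℝ)
    (hL : ∀ (N : ℕ), 2 ≤ N →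
      ∀ (f : BoundedContinuousFunction (Fin N → Λ) ℝ) (ξ : Fin N → Λ),
      L N f ξ = ∑ i : Fin N, ∑' y : {y : Λ // y ≠ ξ i},
        (q (some (ξ i)) (some (y : Λ))
            + q (some (ξ i)) none * etaCount ξ (y : Λ) / ((N : ℝ) - 1))
          * (f (Function.update ξ i (y : Λ)) - f ξ))
    -- π^N is the (unique) invariant probability measure of the N-particle FV process
    (π : (N : ℕ) → (Fin N → Λ) → ℝ)
    (hπ_nonneg : ∀ N, 2 ≤ N → ∀ ξ, 0 ≤ π N ξ)
    (hπ_sum : ∀ N, 2 ≤ N → HasSum (π N) 1)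
    (hπ_inv : ∀ N, 2 ≤ N → ∀ f : BoundedContinuousFunction (Fin N → Λ) ℝ,
      ∑' ξ : Fin N → Λ, π N ξ * L N f ξ = 0) :
    ∀ ε : ℝ, 0 < ε → ∃ G : Finset Λ, ∀ N : ℕ, 2 ≤ N →
      (∑' x : {x : Λ // x ∉ G},
        (∑' ξ : Fin N → Λ, π N ξ * etaCount ξ (x : Λ)) / N) < ε :=
  fv_stationary_tightness_general q hq_nonneg hq_summable qbar hqbar α C hα hC hαC L hL π hπ_nonneg
    hπ_sum hπ_inv
end

section
/- For every probability measure μ on Λ, the conditioned distribution φ_t^μ satisfies the nonlinear Kolmogorov forward equations: for every t > 0 and x ∈ Λ, (d/dt)φ_t^μ(x) = ∑_{y∈Λ} φ_t^μ(y)·(q(y,x) + q(y,0)·φ_t^μ(x)). -/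
/-!
Write `N_s(w) = ∑_z μ(z) P_s(z, w)` for the unnormalized law at time `s`, so that
`φ_s(x) = N_s(x) / (1 - N_s(0))`. Since the exit rates are bounded by `q̄`, the derivatives
`∑_y P_s(z, y) q(y, w)` of the rows of `P` are bounded by `q̄` uniformly in `z` and `s`, so the
series `N_s(w)` may be differentiated term by term; swapping the two resulting sums gives the
linear forward equation `N'_t(w) = ∑_y N_t(y) q(y, w)`. The quotient rule applied to
`N_t(x) / (1 - N_t(0))`, whose denominator is positive because `P_t(z, 0) < 1 - P_t(z, z) < 1`,
then yields the nonlinear equation.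
-/

theorem abs_rate_le_of_exitRate_le {α : Type*} {q : α → α → ℝ} {qbar : ℝ}
    (hq_nonneg : ∀ x y, x ≠ y → 0 ≤ q x y)
    (hq_summable : ∀ x, Summable (fun y : {y : α // y ≠ x} => q x (y : α)))
    (hq_diag : ∀ x, q x x = -∑' y : {y : α // y ≠ x}, q x (y : α))
    (hqbar : ∀ x, (∑' y : {y : α // y ≠ x}, q x (y : α)) ≤ qbar) (a b : α) :
    |q a b| ≤ qbar := by
  have hexit : 0 ≤ ∑' y : {y : α // y ≠ a}, q a (y : α) :=
    tsum_nonneg fun y => hq_nonneg a y y.2.symm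
  rcases eq_or_ne a b with rfl | hab
  · rw [hq_diag, abs_neg, abs_of_nonneg hexit]
    exact hqbar a
  · rw [abs_of_nonneg (hq_nonneg a b hab)]
    exact ((hq_summable a).le_tsum ⟨b, hab.symm⟩ fun y _ => hq_nonneg a y y.2.symm).trans
      (hqbar a)

section WeightedSums

variable {ι κ : Type*}

theorem summable_mul_of_abs_le_s13 {p f : κ → ℝ} {C : ℝ} (hp0 : ∀ y, 0 ≤ p y) (hp : Summable p)
    (hf : ∀ y, |f y| ≤ C) : Summable fun y => p y * f y :=
  Summable.of_norm_bounded (hp.mul_right C) fun y => by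
    rw [Real.norm_eq_abs, abs_mul, abs_of_nonneg (hp0 y)]
    exact mul_le_mul_of_nonneg_left (hf y) (hp0 y)

theorem abs_tsum_mul_le {p f : κ → ℝ} {C : ℝ} (hp0 : ∀ y, 0 ≤ p y) (hp : Summable p)
    (hf : ∀ y, |f y| ≤ C) : |∑' y, p y * f y| ≤ (∑' y, p y) * C := by
  rw [← Real.norm_eq_abs, ← tsum_mul_right]
  refine tsum_of_norm_bounded (hp.mul_right C).hasSum fun y => ?_
  rw [Real.norm_eq_abs, abs_mul, abs_of_nonneg (hp0 y)]
  exact mul_le_mul_of_nonneg_left (hf y) (hp0 y)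

theorem tsum_mul_lt_one {μ a : ι → ℝ} (hμ0 : ∀ z, 0 ≤ μ z) (hμ : HasSum μ 1)
    (ha0 : ∀ z, 0 ≤ a z) (ha1 : ∀ z, a z < 1) : ∑' z, μ z * a z < 1 := by
  obtain ⟨z₀, hz₀⟩ : ∃ z, 0 < μ z := by
    by_contra! h
    have hμ_zero : μ = 0 := funext fun z => le_antisymm (h z) (hμ0 z)
    exact one_ne_zero (hμ.unique (hμ_zero ▸ hasSum_zero))
  have hle : ∀ z, μ z * a z ≤ μ z := fun z => mul_le_of_le_one_right (hμ0 z) (ha1 z).le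
  calc ∑' z, μ z * a z < ∑' z, μ z :=
        Summable.tsum_lt_tsum hle (mul_lt_of_lt_one_right hz₀ (ha1 z₀))
          (.of_nonneg_of_le (fun z => mul_nonneg (hμ0 z) (ha0 z)) hle hμ.summable) hμ.summable
    _ = 1 := hμ.tsum_eq

theorem lt_one_of_hasSum_one {p : κ → ℝ} (hp0 : ∀ y, 0 ≤ p y) (hp : HasSum p 1) {i j : κ}
    (hij : i ≠ j) (hj : 0 < p j) : p i < 1 := by
  classical
  have := sum_le_hasSum {i, j} (fun y _ => hp0 y) hp
  rw [Finset.sum_pair hij] at this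
  linarith

theorem hasDerivAt_tsum_mul_of_abs_deriv_le {μ : ι → ℝ} (hμ0 : ∀ z, 0 ≤ μ z) (hμ : Summable μ)
    {g g' : ι → ℝ → ℝ} {U : Set ℝ} (hU : IsOpen U) (hU' : IsPreconnected U) {C t : ℝ}
    (hg : ∀ z, ∀ s ∈ U, HasDerivAt (g z) (g' z s) s) (hg' : ∀ z, ∀ s ∈ U, |g' z s| ≤ C)
    (ht : t ∈ U) (hgt : Summable fun z => μ z * g z t) :
    HasDerivAt (fun s => ∑' z, μ z * g z s) (∑' z, μ z * g' z t) t := by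
  refine hasDerivAt_tsum_of_isPreconnected (hμ.mul_right C) hU hU'
    (fun z s hs => (hg z s hs).const_mul (μ z)) (fun z s hs => ?_) ht hgt ht
  rw [Real.norm_eq_abs, abs_mul, abs_of_nonneg (hμ0 z)]
  exact mul_le_mul_of_nonneg_left (hg' z s hs) (hμ0 z)

theorem HasDerivAt.div_of_tsum {ν a b : ι → ℝ} {n d : ℝ → ℝ} {t : ℝ}
    (hn : HasDerivAt n (∑' y, ν y * a y) t) (hd : HasDerivAt d (-∑' y, ν y * b y) t)
    (hd0 : d t ≠ 0) (ha : Summable fun y => ν y * a y) (hb : Summable fun y => ν y * b y) :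
    HasDerivAt (fun s => n s / d s) (∑' y, ν y / d t * (a y + b y * (n t / d t))) t := by
  refine (hn.div hd hd0).congr_deriv ?_
  have hsplit : ∀ y, ν y / d t * (a y + b y * (n t / d t))
      = ν y * a y / d t + ν y * b y * (n t / d t ^ 2) := fun y => by
    field_simp
  rw [tsum_congr hsplit, (ha.div_const _).tsum_add (hb.mul_right _), tsum_div_const,
    tsum_mul_right]
  field_simp
  ring

end WeightedSums

structure IsSubstochastic {ι κ : Type*} (K : ι → κ → ℝ) : Prop where
  nonneg : ∀ z y, 0 ≤ K z y
  summable : ∀ z, Summable (K z)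
  tsum_le_one : ∀ z, ∑' y, K z y ≤ 1

namespace IsSubstochastic

variable {ι κ : Type*} {K : ι → κ → ℝ} {μ : ι → ℝ}

theorem of_hasSum_option {P : ι → Option κ → ℝ} (hP0 : ∀ z y, 0 ≤ P z y)
    (hP : ∀ z, HasSum (P z) 1) : IsSubstochastic fun z (y : κ) => P z (some y) where
  nonneg z y := hP0 z (some y)
  summable z := (hP z).summable.comp_injective (Option.some_injective κ)
  tsum_le_one z :=
    (tsum_comp_le_tsum_of_inj (hP z).summable (hP0 z) (Option.some_injective κ)).trans_eq
      (hP z).tsum_eq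

theorem abs_tsum_mul_le (hK : IsSubstochastic K) {f : κ → ℝ} {C : ℝ} (hf : ∀ y, |f y| ≤ C)
    (hC : 0 ≤ C) (z : ι) : |∑' y, K z y * f y| ≤ C :=
  (_root_.abs_tsum_mul_le (hK.nonneg z) (hK.summable z) hf).trans
    (mul_le_of_le_one_left hC (hK.tsum_le_one z))

theorem summable_weighted (hK : IsSubstochastic K) (hμ0 : ∀ z, 0 ≤ μ z) (hμ : Summable μ) :
    Summable fun p : ι × κ => μ p.1 * K p.1 p.2 := by
  refine (summable_prod_of_nonneg fun p => mul_nonneg (hμ0 p.1) (hK.nonneg p.1 p.2)).2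
    ⟨fun z => (hK.summable z).mul_left (μ z), .of_nonneg_of_le
      (fun z => tsum_nonneg fun y => mul_nonneg (hμ0 z) (hK.nonneg z y)) (fun z => ?_) hμ⟩
  rw [show ∑' y, μ z * K z y = μ z * ∑' y, K z y from tsum_mul_left]
  exact mul_le_of_le_one_right (hμ0 z) (hK.tsum_le_one z)

theorem summable_tsum_weighted_mul (hK : IsSubstochastic K) (hμ0 : ∀ z, 0 ≤ μ z)
    (hμ : Summable μ) {f : κ → ℝ} {C : ℝ} (hf : ∀ y, |f y| ≤ C) :
    Summable fun y => (∑' z, μ z * K z y) * f y :=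
  summable_mul_of_abs_le_s13 (fun y => tsum_nonneg fun z => mul_nonneg (hμ0 z) (hK.nonneg z y))
    (hK.summable_weighted hμ0 hμ).prod_symm.prod hf

theorem tsum_mul_tsum_comm (hK : IsSubstochastic K) (hμ0 : ∀ z, 0 ≤ μ z) (hμ : Summable μ)
    {f : κ → ℝ} {C : ℝ} (hf : ∀ y, |f y| ≤ C) :
    ∑' z, μ z * ∑' y, K z y * f y = ∑' y, (∑' z, μ z * K z y) * f y := by
  have hsum : Summable (Function.uncurry fun z y => μ z * (K z y * f y)) := by
    refine Summable.of_norm_bounded ((hK.summable_weighted hμ0 hμ).mul_right C) fun p => ?_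
    rw [Function.uncurry_apply_pair, Real.norm_eq_abs, ← mul_assoc, abs_mul,
      abs_of_nonneg (mul_nonneg (hμ0 p.1) (hK.nonneg p.1 p.2))]
    exact mul_le_mul_of_nonneg_left (hf p.2) (mul_nonneg (hμ0 p.1) (hK.nonneg p.1 p.2))
  calc ∑' z, μ z * ∑' y, K z y * f y = ∑' z, ∑' y, μ z * (K z y * f y) := by
        simp_rw [tsum_mul_left]
    _ = ∑' y, ∑' z, μ z * (K z y * f y) := hsum.tsum_comm.symm
    _ = ∑' y, (∑' z, μ z * K z y) * f y := by
        simp_rw [← tsum_mul_right, mul_assoc]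

end IsSubstochastic

theorem hasDerivAt_tsum_mul_transition {Λ : Type*} {q : Option Λ → Option Λ → ℝ} {qbar : ℝ}
    (hqb : ∀ a b, |q a b| ≤ qbar) {P : ℝ → Option Λ → Option Λ → ℝ}
    (hP_nonneg : ∀ t, 0 ≤ t → ∀ x y, 0 ≤ P t x y)
    (hP_rowsum : ∀ t, 0 ≤ t → ∀ x, HasSum (P t x) 1)
    (hP_forward : ∀ t, 0 < t → ∀ z : Λ, ∀ x : Option Λ,
      HasDerivAt (fun s => P s (some z) x)
        (∑' y : Λ, P t (some z) (some y) * q (some y) x) t)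
    {μ : Λ → ℝ} (hμ0 : ∀ z, 0 ≤ μ z) (hμ : Summable μ) {t : ℝ} (ht : 0 < t) (w : Option Λ) :
    HasDerivAt (fun s => ∑' z, μ z * P s (some z) w)
      (∑' y, (∑' z, μ z * P t (some z) (some y)) * q (some y) w) t := by
  have hK : ∀ s, 0 ≤ s → IsSubstochastic fun z y : Λ => P s (some z) (some y) := fun s hs =>
    .of_hasSum_option (fun z => hP_nonneg s hs (some z)) fun z => hP_rowsum s hs (some z)
  have hP_le_one : ∀ z, P t (some z) w ≤ 1 := fun z =>
    le_hasSum (hP_rowsum t ht.le (some z)) w fun y _ => hP_nonneg t ht.le (some z) y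
  have hqbar0 : 0 ≤ qbar := (abs_nonneg _).trans (hqb w w)
  rw [← (hK t ht.le).tsum_mul_tsum_comm hμ0 hμ (hqb · w)]
  exact hasDerivAt_tsum_mul_of_abs_deriv_le hμ0 hμ isOpen_Ioi isPreconnected_Ioi
    (fun z s hs => hP_forward s hs z w)
    (fun z s hs => (hK s (le_of_lt hs)).abs_tsum_mul_le (hqb · w) hqbar0 z) ht
    (.of_nonneg_of_le (fun z => mul_nonneg (hμ0 z) (hP_nonneg t ht.le _ _))
      (fun z => mul_le_of_le_one_right (hμ0 z) (hP_le_one z)) hμ)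

theorem fv_phi_forward_equations_general
    {Λ : Type*}
    -- the rate matrix Q on Λ ∪ {0} (`none` is the absorbing state 0)
    (q : Option Λ → Option Λ → ℝ)
    (hq_nonneg : ∀ x y, x ≠ y → 0 ≤ q x y)
    (hq_summable : ∀ x, Summable (fun y : {y : Option Λ // y ≠ x} => q x (y : Option Λ)))
    (hq_diag : ∀ x, q x x = -∑' y : {y : Option Λ // y ≠ x}, q x (y : Option Λ))
    (qbar : ℝ)
    (hqbar : ∀ x, (∑' y : {y : Option Λ // y ≠ x}, q x (y : Option Λ)) ≤ qbar)
    -- the transition semigroup P of Q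
    (P : ℝ → Option Λ → Option Λ → ℝ)
    (hP_nonneg : ∀ t, 0 ≤ t → ∀ x y, 0 ≤ P t x y)
    (hP_rowsum : ∀ t, 0 ≤ t → ∀ x, HasSum (P t x) 1)
    (hP_forward : ∀ t, 0 < t → ∀ z : Λ, ∀ x : Option Λ,
      HasDerivAt (fun s => P s (some z) x)
        (∑' y : Λ, P t (some z) (some y) * q (some y) x) t)
    (hP_pos : ∀ t, 0 < t → ∀ x y : Λ, 0 < P t (some x) (some y))
    (μ : Λ → ℝ) (hμ_nonneg : ∀ x, 0 ≤ μ x) (hμ_sum : HasSum μ 1)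
    -- the conditioned distribution φ_t^μ
    (φ : ℝ → Λ → ℝ)
    (hφ : ∀ t x, φ t x =
      (∑' z : Λ, μ z * P t (some z) (some x)) /
        (1 - ∑' z : Λ, μ z * P t (some z) none)) :
    ∀ t, 0 < t → ∀ x : Λ,
      HasDerivAt (fun s => φ s x)
        (∑' y : Λ, φ t y * (q (some y) (some x) + q (some y) none * φ t x)) t := by
  intro t ht x
  have hqb := abs_rate_le_of_exitRate_le hq_nonneg hq_summable hq_diag hqbar
  have hN := hasDerivAt_tsum_mul_transition hqb hP_nonneg hP_rowsum hP_forward hμ_nonneg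
    hμ_sum.summable ht
  have hK := IsSubstochastic.of_hasSum_option (fun z => hP_nonneg t ht.le (some z))
    fun z => hP_rowsum t ht.le (some z)
  have hD : 0 < 1 - ∑' z, μ z * P t (some z) none :=
    sub_pos.2 <| tsum_mul_lt_one hμ_nonneg hμ_sum (fun z => hP_nonneg t ht.le _ _) fun z =>
      lt_one_of_hasSum_one (hP_nonneg t ht.le _) (hP_rowsum t ht.le _)
        (Option.some_ne_none z).symm (hP_pos t ht z z)
  obtain rfl : φ = fun s y => (∑' z, μ z * P s (some z) (some y)) /
      (1 - ∑' z, μ z * P s (some z) none) := funext₂ hφ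
  exact (hN (some x)).div_of_tsum (by simpa using (hN none).const_sub 1) hD.ne'
    (hK.summable_tsum_weighted_mul hμ_nonneg hμ_sum.summable (hqb · (some x)))
    (hK.summable_tsum_weighted_mul hμ_nonneg hμ_sum.summable (hqb · none))

/-- the conditioned distribution `φ_t^μ` satisfies the nonlinear Kolmogorov
forward equations. -/
theorem fv_phi_forward_equations
    {Λ : Type*} [Countable Λ] [Nonempty Λ] [DecidableEq Λ]
    -- the rate matrix Q on Λ ∪ {0} (`none` is the absorbing state 0)
    (q : Option Λ → Option Λ → ℝ)
    (hq_nonneg : ∀ x y, x ≠ y → 0 ≤ q x y)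
    (hq_absorb : ∀ y, q none y = 0)
    (hq_summable : ∀ x, Summable (fun y : {y : Option Λ // y ≠ x} => q x (y : Option Λ)))
    (hq_diag : ∀ x, q x x = -∑' y : {y : Option Λ // y ≠ x}, q x (y : Option Λ))
    (qbar : ℝ)
    (hqbar : ∀ x, (∑' y : {y : Option Λ // y ≠ x}, q x (y : Option Λ)) ≤ qbar)
    -- the transition semigroup P of Q
    (P : ℝ → Option Λ → Option Λ → ℝ)
    (hP_nonneg : ∀ t, 0 ≤ t → ∀ x y, 0 ≤ P t x y)
    (hP_rowsum : ∀ t, 0 ≤ t → ∀ x, HasSum (P t x) 1)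
    (hP_zero : ∀ x y, P 0 x y = if x = y then 1 else 0)
    (hP_CK : ∀ s t, 0 ≤ s → 0 ≤ t → ∀ x y,
      P (t + s) x y = ∑' z : Option Λ, P t x z * P s z y)
    (hP_forward : ∀ t, 0 < t → ∀ z : Λ, ∀ x : Option Λ,
      HasDerivAt (fun s => P s (some z) x)
        (∑' y : Λ, P t (some z) (some y) * q (some y) x) t)
    (hP_pos : ∀ t, 0 < t → ∀ x y : Λ, 0 < P t (some x) (some y))
    (μ : Λ → ℝ) (hμ_nonneg : ∀ x, 0 ≤ μ x) (hμ_sum : HasSum μ 1)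
    -- the conditioned distribution φ_t^μ
    (φ : ℝ → Λ → ℝ)
    (hφ : ∀ t x, φ t x =
      (∑' z : Λ, μ z * P t (some z) (some x)) /
        (1 - ∑' z : Λ, μ z * P t (some z) none)) :
    ∀ t, 0 < t → ∀ x : Λ,
      HasDerivAt (fun s => φ s x)
        (∑' y : Λ, φ t y * (q (some y) (some x) + q (some y) none * φ t x)) t :=
  fv_phi_forward_equations_general q hq_nonneg hq_summable hq_diag qbar hqbar P hP_nonneg hP_rowsum
    hP_forward hP_pos μ hμ_nonneg hμ_sum φ hφ
end

section
/- The nonlinear forward equations have a unique solution: suppose φ, ψ : [0,∞) → [0,1]^Λ are such that ∑_{x∈Λ} φ_t(x) ≤ 1 and ∑_{x∈Λ} ψ_t(x) ≤ 1 for all t, for each x the maps t ↦ φ_t(x) and t ↦ ψ_t(x) are differentiable and satisfy (d/dt)φ_t(x) = ∑_{y∈Λ} φ_t(y)·(q(y,x) + q(y,0)·φ_t(x)) and likewise for ψ, the interchange of differentiation and summation over Λ is valid (e.g. for each T > 0, ∑_{x∈Λ} sup_{t≤T} |(d/dt)(φ_t(x) − ψ_t(x))| < ∞), and φ_0 = ψ_0.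 Then φ_t(x) = ψ_t(x) for all t ≥ 0 and x ∈ Λ. -/
/-!
Write `g x t = φ t x - ψ t x` and `u t = ∑' x, |g x t|`. On subprobability vectors the forward
field is `4 qbar`-Lipschitz in `ℓ¹`: its difference at `φ` and `ψ` is
`∑' y, (q y x + c y * φ x) * g y + g x * ∑' y, c y * ψ y` with `c y = q (some y) none`, and the
pieces are controlled by row sums of `|q|`, by `c ≤ qbar` and by masses `≤ 1`. The interchange
hypothesis gives a summable bound on the derivatives of the `g x` over `[0, T]`, so by dominated
convergence the upper right Dini derivative of `u` is at most `∑' x, |∂ₜ g x t| ≤ 4 qbar * u t`,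
and Grönwall's inequality with `u 0 = 0` forces `u = 0`.
-/

open Set Filter Topology

structure IsBoundedRateMatrix {α : Type*} (q : α → α → ℝ) (qbar : ℝ) : Prop where
  nonneg_of_ne : ∀ x y, x ≠ y → 0 ≤ q x y
  summable_offDiag : ∀ x, Summable fun y : {y // y ≠ x} => q x y
  diag_eq : ∀ x, q x x = -∑' y : {y // y ≠ x}, q x y
  tsum_offDiag_le : ∀ x, ∑' y : {y // y ≠ x}, q x y ≤ qbar

namespace IsBoundedRateMatrix

variable {α : Type*} {q : α → α → ℝ} {qbar : ℝ}

theorem le_of_ne (hq : IsBoundedRateMatrix q qbar) {x y : α} (h : y ≠ x) : q x y ≤ qbar :=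
  ((hq.summable_offDiag x).le_tsum ⟨y, h⟩ fun z _ => hq.nonneg_of_ne x z z.2.symm).trans
    (hq.tsum_offDiag_le x)

theorem abs_diag_le (hq : IsBoundedRateMatrix q qbar) (x : α) : |q x x| ≤ qbar := by
  rw [hq.diag_eq x, abs_neg,
    abs_of_nonneg (tsum_nonneg fun z : {y // y ≠ x} => hq.nonneg_of_ne x z z.2.symm)]
  exact hq.tsum_offDiag_le x

theorem abs_le (hq : IsBoundedRateMatrix q qbar) (x y : α) : |q x y| ≤ qbar := by
  rcases eq_or_ne y x with rfl | h
  · exact hq.abs_diag_le y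
  · rw [abs_of_nonneg (hq.nonneg_of_ne x y h.symm)]
    exact hq.le_of_ne h

theorem sum_erase_le [DecidableEq α] (hq : IsBoundedRateMatrix q qbar) (x : α) (F : Finset α) :
    ∑ y ∈ F.erase x, q x y ≤ qbar := by
  rw [← Finset.filter_ne', ← Finset.sum_subtype_eq_sum_filter]
  exact ((hq.summable_offDiag x).sum_le_tsum _
    fun (z : {y // y ≠ x}) _ => hq.nonneg_of_ne x z z.2.symm).trans (hq.tsum_offDiag_le x)

theorem sum_abs_le (hq : IsBoundedRateMatrix q qbar) (x : α) (F : Finset α) :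
    ∑ y ∈ F, |q x y| ≤ 2 * qbar := by
  classical
  calc ∑ y ∈ F, |q x y| ≤ ∑ y ∈ insert x F, |q x y| :=
        Finset.sum_le_sum_of_subset_of_nonneg (F.subset_insert x) fun _ _ _ => abs_nonneg _
    _ = |q x x| + ∑ y ∈ F.erase x, q x y := by
        rw [← Finset.add_sum_erase _ _ (F.mem_insert_self x), Finset.erase_insert_eq_erase]
        refine congrArg _ (Finset.sum_congr rfl fun y hy => ?_)
        exact abs_of_nonneg (hq.nonneg_of_ne x y (Finset.ne_of_mem_erase hy).symm)
    _ ≤ 2 * qbar := by linarith [hq.abs_diag_le x, hq.sum_erase_le x F]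

end IsBoundedRateMatrix

structure IsSubprobability {Λ : Type*} (p : Λ → ℝ) : Prop where
  mem_Icc : ∀ x, p x ∈ Icc (0 : ℝ) 1
  summable : Summable p
  tsum_le_one : ∑' x, p x ≤ 1

theorem IsSubprobability.summable_abs_sub {Λ : Type*} {p p' : Λ → ℝ} (hp : IsSubprobability p)
    (hp' : IsSubprobability p') : Summable fun x => |p x - p' x| :=
  (hp.summable.sub hp'.summable).abs

noncomputable def forwardField {Λ : Type*} (q : Option Λ → Option Λ → ℝ) (p : Λ → ℝ) (x : Λ) :
    ℝ :=
  ∑' y, p y * (q (some y) (some x) + q (some y) none * p x)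

namespace IsBoundedRateMatrix

variable {Λ : Type*} {q : Option Λ → Option Λ → ℝ} {qbar : ℝ} {p p' : Λ → ℝ}

theorem bound_nonneg (hq : IsBoundedRateMatrix q qbar) : 0 ≤ qbar :=
  (abs_nonneg (q none none)).trans (hq.abs_le none none)

theorem absorption_nonneg (hq : IsBoundedRateMatrix q qbar) (y : Λ) : 0 ≤ q (some y) none :=
  hq.nonneg_of_ne _ _ (Option.some_ne_none y)

theorem absorption_le (hq : IsBoundedRateMatrix q qbar) (y : Λ) : q (some y) none ≤ qbar :=
  hq.le_of_ne (Option.some_ne_none y).symm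

theorem abs_rate_add_absorption_le (hq : IsBoundedRateMatrix q qbar) {a : ℝ} (ha : 0 ≤ a)
    (y x : Λ) :
    |q (some y) (some x) + q (some y) none * a| ≤ |q (some y) (some x)| + q (some y) none * a :=
  (abs_add_le _ _).trans_eq (by rw [abs_of_nonneg (mul_nonneg (hq.absorption_nonneg y) ha)])

theorem rate_add_absorption_le (hq : IsBoundedRateMatrix q qbar) {a : ℝ} (ha : a ≤ 1)
    (y x : Λ) :
    |q (some y) (some x)| + q (some y) none * a ≤ 2 * qbar := by
  have hc : q (some y) none * a ≤ qbar :=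
    (mul_le_of_le_one_right (hq.absorption_nonneg y) ha).trans (hq.absorption_le y)
  linarith [hq.abs_le (some y) (some x)]

theorem sum_rate_add_absorption_le (hq : IsBoundedRateMatrix q qbar) (hp : IsSubprobability p)
    (y : Λ) (F : Finset Λ) :
    ∑ x ∈ F, (|q (some y) (some x)| + q (some y) none * p x) ≤ 3 * qbar := by
  have hrates : ∑ x ∈ F, |q (some y) (some x)| ≤ 2 * qbar := by
    simpa using hq.sum_abs_le (some y) (F.map .some)
  have hmass : ∑ x ∈ F, p x ≤ 1 :=
    (hp.summable.sum_le_tsum F fun x _ => (hp.mem_Icc x).1).trans hp.tsum_le_one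
  have habs : q (some y) none * ∑ x ∈ F, p x ≤ qbar :=
    (mul_le_of_le_one_right (hq.absorption_nonneg y) hmass).trans (hq.absorption_le y)
  rw [Finset.sum_add_distrib, ← Finset.mul_sum]
  linarith

theorem summable_forwardField_term (hq : IsBoundedRateMatrix q qbar) (hp : IsSubprobability p)
    (x : Λ) : Summable fun y => p y * (q (some y) (some x) + q (some y) none * p x) := by
  refine (hp.summable.mul_right (2 * qbar)).of_norm_bounded fun y => ?_
  rw [Real.norm_eq_abs, abs_mul, abs_of_nonneg (hp.mem_Icc y).1]
  exact mul_le_mul_of_nonneg_left ((hq.abs_rate_add_absorption_le (hp.mem_Icc x).1 y x).trans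
    (hq.rate_add_absorption_le (hp.mem_Icc x).2 y x)) (hp.mem_Icc y).1

theorem abs_forwardField_le (hq : IsBoundedRateMatrix q qbar) (hp : IsSubprobability p) (x : Λ) :
    |forwardField q p x| ≤ 2 * qbar := by
  have hbound : |forwardField q p x| ≤ (∑' y, p y) * (2 * qbar) := by
    rw [← Real.norm_eq_abs]
    refine tsum_of_norm_bounded (hp.summable.hasSum.mul_right (2 * qbar)) fun y => ?_
    rw [Real.norm_eq_abs, abs_mul, abs_of_nonneg (hp.mem_Icc y).1]
    exact mul_le_mul_of_nonneg_left ((hq.abs_rate_add_absorption_le (hp.mem_Icc x).1 y x).trans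
      (hq.rate_add_absorption_le (hp.mem_Icc x).2 y x)) (hp.mem_Icc y).1
  nlinarith [hp.tsum_le_one, hq.bound_nonneg]

theorem summable_absorption_mul (hq : IsBoundedRateMatrix q qbar) (hp : IsSubprobability p) :
    Summable fun y => q (some y) none * p y :=
  (hp.summable.mul_left qbar).of_nonneg_of_le
    (fun y => mul_nonneg (hq.absorption_nonneg y) (hp.mem_Icc y).1)
    fun y => mul_le_mul_of_nonneg_right (hq.absorption_le y) (hp.mem_Icc y).1

theorem tsum_absorption_mul_le (hq : IsBoundedRateMatrix q qbar) (hp : IsSubprobability p) :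
    ∑' y, q (some y) none * p y ≤ qbar :=
  calc ∑' y, q (some y) none * p y ≤ ∑' y, qbar * p y :=
        (hq.summable_absorption_mul hp).tsum_le_tsum
          (fun y => mul_le_mul_of_nonneg_right (hq.absorption_le y) (hp.mem_Icc y).1)
          (hp.summable.mul_left qbar)
    _ ≤ qbar := by
        rw [tsum_mul_left]
        exact mul_le_of_le_one_right hq.bound_nonneg hp.tsum_le_one

theorem summable_rate_add_absorption_mul (hq : IsBoundedRateMatrix q qbar) (hp : IsSubprobability p)
    (hp' : IsSubprobability p') (x : Λ) :
    Summable fun y => (|q (some y) (some x)| + q (some y) none * p x) * |p y - p' y| := by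
  refine ((hp.summable_abs_sub hp').mul_left (2 * qbar)).of_norm_bounded fun y => ?_
  rw [Real.norm_eq_abs, abs_mul, abs_abs]
  exact mul_le_mul_of_nonneg_right
    ((abs_of_nonneg (add_nonneg (abs_nonneg _) (mul_nonneg (hq.absorption_nonneg y)
      (hp.mem_Icc x).1))).trans_le (hq.rate_add_absorption_le (hp.mem_Icc x).2 y x))
    (abs_nonneg _)

theorem forwardField_sub_eq (hq : IsBoundedRateMatrix q qbar) (hp : IsSubprobability p)
    (hp' : IsSubprobability p') (x : Λ) :
    forwardField q p x - forwardField q p' x =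
      ∑' y, (q (some y) (some x) + q (some y) none * p x) * (p y - p' y) +
        (p x - p' x) * ∑' y, q (some y) none * p' y := by
  have hsum : Summable fun y => (q (some y) (some x) + q (some y) none * p x) * (p y - p' y) :=
    (hq.summable_rate_add_absorption_mul hp hp' x).of_norm_bounded fun y => by
      rw [Real.norm_eq_abs, abs_mul]
      exact mul_le_mul_of_nonneg_right (hq.abs_rate_add_absorption_le (hp.mem_Icc x).1 y x)
        (abs_nonneg _)
  rw [forwardField, forwardField, ← (hq.summable_forwardField_term hp x).tsum_sub
    (hq.summable_forwardField_term hp' x), ← tsum_mul_left,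
    ← hsum.tsum_add ((hq.summable_absorption_mul hp').mul_left _)]
  congr 1
  ext y
  ring

theorem abs_forwardField_sub_le (hq : IsBoundedRateMatrix q qbar) (hp : IsSubprobability p)
    (hp' : IsSubprobability p') (x : Λ) :
    |forwardField q p x - forwardField q p' x| ≤
      ∑' y, (|q (some y) (some x)| + q (some y) none * p x) * |p y - p' y| +
        qbar * |p x - p' x| := by
  rw [hq.forwardField_sub_eq hp hp' x]
  refine (abs_add_le _ _).trans (add_le_add ?_ ?_)
  · rw [← Real.norm_eq_abs]
    refine tsum_of_norm_bounded (hq.summable_rate_add_absorption_mul hp hp' x).hasSum fun y => ?_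
    rw [Real.norm_eq_abs, abs_mul]
    exact mul_le_mul_of_nonneg_right (hq.abs_rate_add_absorption_le (hp.mem_Icc x).1 y x)
      (abs_nonneg _)
  · rw [abs_mul, abs_of_nonneg (tsum_nonneg fun y =>
      mul_nonneg (hq.absorption_nonneg y) (hp'.mem_Icc y).1), mul_comm]
    exact mul_le_mul_of_nonneg_right (hq.tsum_absorption_mul_le hp') (abs_nonneg _)

theorem tsum_abs_forwardField_sub_le (hq : IsBoundedRateMatrix q qbar) (hp : IsSubprobability p)
    (hp' : IsSubprobability p') :
    ∑' x, |forwardField q p x - forwardField q p' x| ≤ 4 * qbar * ∑' x, |p x - p' x| := by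
  refine Real.tsum_le_of_sum_le (fun _ => abs_nonneg _) fun F => ?_
  have hcol : ∀ y, ∑ x ∈ F, (|q (some y) (some x)| + q (some y) none * p x) * |p y - p' y| ≤
      3 * qbar * |p y - p' y| := fun y => by
    rw [← Finset.sum_mul]
    exact mul_le_mul_of_nonneg_right (hq.sum_rate_add_absorption_le hp y F) (abs_nonneg _)
  calc ∑ x ∈ F, |forwardField q p x - forwardField q p' x|
      ≤ ∑ x ∈ F, (∑' y, (|q (some y) (some x)| + q (some y) none * p x) * |p y - p' y| +
          qbar * |p x - p' x|) := Finset.sum_le_sum fun x _ => hq.abs_forwardField_sub_le hp hp' x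
    _ = ∑' y, ∑ x ∈ F, (|q (some y) (some x)| + q (some y) none * p x) * |p y - p' y| +
          qbar * ∑ x ∈ F, |p x - p' x| := by
        rw [Finset.sum_add_distrib, ← Finset.mul_sum, Summable.tsum_finsetSum
          fun x _ => hq.summable_rate_add_absorption_mul hp hp' x]
    _ ≤ ∑' y, 3 * qbar * |p y - p' y| + qbar * ∑' x, |p x - p' x| := by
        refine add_le_add ?_ (mul_le_mul_of_nonneg_left ?_ hq.bound_nonneg)
        · exact (summable_sum fun x _ => hq.summable_rate_add_absorption_mul hp hp' x).tsum_le_tsum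
            hcol ((hp.summable_abs_sub hp').mul_left _)
        · exact (hp.summable_abs_sub hp').sum_le_tsum F fun _ _ => abs_nonneg _
    _ = 4 * qbar * ∑' x, |p x - p' x| := by rw [tsum_mul_left]; ring

end IsBoundedRateMatrix

section Gronwall

variable {ι : Type*} {g D : ι → ℝ → ℝ} {M : ι → ℝ} {a b : ℝ}

theorem abs_sub_le_of_abs_deriv_le {f f' : ℝ → ℝ} {C : ℝ}
    (hf : ∀ t ∈ Icc a b, HasDerivWithinAt f (f' t) (Icc a b) t)
    (hC : ∀ t ∈ Icc a b, |f' t| ≤ C)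
    {s t : ℝ} (hs : s ∈ Icc a b) (ht : t ∈ Icc a b) : |f t - f s| ≤ C * |t - s| :=
  (convex_Icc a b).norm_image_sub_le_of_norm_hasDerivWithin_le hf hC hs ht

theorem abs_le_of_abs_deriv_le
    (hg : ∀ i, ∀ t ∈ Icc a b, HasDerivWithinAt (g i) (D i t) (Icc a b) t)
    (hDM : ∀ i, ∀ t ∈ Icc a b, |D i t| ≤ M i) (ha : ∀ i, g i a = 0) (i : ι) {t : ℝ}
    (ht : t ∈ Icc a b) : |g i t| ≤ M i * (b - a) := by
  have hMi : 0 ≤ M i := (abs_nonneg _).trans (hDM i t ht)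
  have := abs_sub_le_of_abs_deriv_le (hg i) (hDM i) (left_mem_Icc.2 (ht.1.trans ht.2)) ht
  rw [ha, sub_zero, abs_of_nonneg (sub_nonneg.2 ht.1)] at this
  exact this.trans (mul_le_mul_of_nonneg_left (by linarith [ht.2]) hMi)

theorem summable_abs_of_abs_deriv_le (hM : Summable M)
    (hg : ∀ i, ∀ t ∈ Icc a b, HasDerivWithinAt (g i) (D i t) (Icc a b) t)
    (hDM : ∀ i, ∀ t ∈ Icc a b, |D i t| ≤ M i) (ha : ∀ i, g i a = 0) {t : ℝ}
    (ht : t ∈ Icc a b) :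
    Summable fun i => |g i t| :=
  (hM.mul_right (b - a)).of_nonneg_of_le (fun _ => abs_nonneg _)
    fun i => abs_le_of_abs_deriv_le hg hDM ha i ht

theorem continuousOn_tsum_abs_of_abs_deriv_le (hM : Summable M)
    (hg : ∀ i, ∀ t ∈ Icc a b, HasDerivWithinAt (g i) (D i t) (Icc a b) t)
    (hDM : ∀ i, ∀ t ∈ Icc a b, |D i t| ≤ M i) (ha : ∀ i, g i a = 0) :
    ContinuousOn (fun t => ∑' i, |g i t|) (Icc a b) :=
  continuousOn_tsum (fun i t ht => (hg i t ht).continuousWithinAt.abs)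
    (hM.mul_right (b - a)) fun i t ht => by
      rw [Real.norm_eq_abs, abs_abs]
      exact abs_le_of_abs_deriv_le hg hDM ha i ht

/-- The upper right Dini derivative of `t ↦ ∑' i, |g i t|` is at most `∑' i, |D i t|`. -/
theorem frequently_slope_tsum_abs_lt (hM : Summable M)
    (hg : ∀ i, ∀ t ∈ Icc a b, HasDerivWithinAt (g i) (D i t) (Icc a b) t)
    (hDM : ∀ i, ∀ t ∈ Icc a b, |D i t| ≤ M i) (ha : ∀ i, g i a = 0) {t : ℝ}
    (ht : t ∈ Ico a b) {r : ℝ} (hr : ∑' i, |D i t| < r) :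
    ∃ᶠ z in 𝓝[>] t, (z - t)⁻¹ * (∑' i, |g i z| - ∑' i, |g i t|) < r := by
  have ht' : t ∈ Icc a b := Ico_subset_Icc_self ht
  have hIoc : ∀ z ∈ Ioc t b, z ∈ Icc a b := fun z hz => ⟨ht.1.trans hz.1.le, hz.2⟩
  have hslope : ∀ z ∈ Ioc t b, ∀ i, |(z - t)⁻¹ * (g i z - g i t)| ≤ M i := by
    intro z hz i
    rw [abs_mul, abs_inv, inv_mul_le_iff₀ (abs_pos.2 (sub_ne_zero.2 hz.1.ne')), mul_comm]
    exact abs_sub_le_of_abs_deriv_le (hg i) (hDM i) ht' (hIoc z hz)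
  have hlim : Tendsto (fun z => ∑' i, |(z - t)⁻¹ * (g i z - g i t)|) (𝓝[>] t)
      (𝓝 (∑' i, |D i t|)) := by
    refine tendsto_tsum_of_dominated_convergence hM (fun i => ?_) ?_
    · have hderiv := (hg i t ht').mono_of_mem_nhdsWithin (Icc_mem_nhdsGT_of_mem ht)
      rw [hasDerivWithinAt_iff_tendsto_slope' (show t ∉ Ioi t from lt_irrefl t)] at hderiv
      simpa only [slope_def_module, smul_eq_mul] using hderiv.abs
    · filter_upwards [Ioc_mem_nhdsGT ht.2] with z hz i
      rw [Real.norm_eq_abs, abs_abs]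
      exact hslope z hz i
  refine Eventually.frequently ?_
  filter_upwards [hlim.eventually (gt_mem_nhds hr), Ioc_mem_nhdsGT ht.2] with z hzr hz
  have hsum : ∀ {s}, s ∈ Icc a b → Summable fun i => |g i s| :=
    summable_abs_of_abs_deriv_le hM hg hDM ha
  refine lt_of_le_of_lt ?_ hzr
  rw [← (hsum (hIoc z hz)).tsum_sub (hsum ht'), ← tsum_mul_left]
  refine Summable.tsum_le_tsum (fun i => ?_) (((hsum (hIoc z hz)).sub (hsum ht')).mul_left _)
    (hM.of_nonneg_of_le (fun _ => abs_nonneg _) (hslope z hz))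
  rw [abs_mul, abs_of_pos (inv_pos.2 (sub_pos.2 hz.1))]
  exact mul_le_mul_of_nonneg_left (abs_sub_abs_le_abs_sub _ _) (inv_nonneg.2 (sub_pos.2 hz.1).le)

theorem eq_zero_of_tsum_abs_deriv_le (hM : Summable M)
    (hg : ∀ i, ∀ t ∈ Icc a b, HasDerivWithinAt (g i) (D i t) (Icc a b) t)
    (hDM : ∀ i, ∀ t ∈ Icc a b, |D i t| ≤ M i) (ha : ∀ i, g i a = 0) {K : ℝ}
    (hK : ∀ t ∈ Ico a b, ∑' i, |D i t| ≤ K * ∑' i, |g i t|) {t : ℝ} (ht : t ∈ Icc a b)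
    (i : ι) :
    g i t = 0 := by
  have hu := le_gronwallBound_of_liminf_deriv_right_le (δ := 0) (ε := 0)
    (continuousOn_tsum_abs_of_abs_deriv_le hM hg hDM ha)
    (fun s hs r hr => frequently_slope_tsum_abs_lt hM hg hDM ha hs hr) (by simp [ha])
    (fun s hs => (hK s hs).trans_eq (add_zero _).symm) t ht
  rw [gronwallBound_ε0_δ0] at hu
  exact abs_nonpos_iff.1 (((summable_abs_of_abs_deriv_le hM hg hDM ha ht).le_tsum i
    fun _ _ => abs_nonneg _).trans hu)

end Gronwall

theorem fv_forward_equations_unique_general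
    {Λ : Type*}
    -- the rate matrix Q on Λ ∪ {0} (`none` is the absorbing state 0)
    (q : Option Λ → Option Λ → ℝ)
    (hq_nonneg : ∀ x y, x ≠ y → 0 ≤ q x y)
    (hq_summable : ∀ x, Summable (fun y : {y : Option Λ // y ≠ x} => q x (y : Option Λ)))
    (hq_diag : ∀ x, q x x = -∑' y : {y : Option Λ // y ≠ x}, q x (y : Option Λ))
    (qbar : ℝ)
    (hqbar : ∀ x, (∑' y : {y : Option Λ // y ≠ x}, q x (y : Option Λ)) ≤ qbar)
    -- two solutions φ and ψ of the nonlinear forward equations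
    (φ ψ : ℝ → Λ → ℝ)
    (hφ_mem : ∀ t, 0 ≤ t → ∀ x, φ t x ∈ Set.Icc (0:ℝ) 1)
    (hψ_mem : ∀ t, 0 ≤ t → ∀ x, ψ t x ∈ Set.Icc (0:ℝ) 1)
    (hφ_summable : ∀ t, 0 ≤ t → Summable (φ t))
    (hψ_summable : ∀ t, 0 ≤ t → Summable (ψ t))
    (hφ_mass : ∀ t, 0 ≤ t → ∑' x : Λ, φ t x ≤ 1)
    (hψ_mass : ∀ t, 0 ≤ t → ∑' x : Λ, ψ t x ≤ 1)
    (hφ_deriv : ∀ t, 0 ≤ t → ∀ x : Λ,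
      HasDerivAt (fun s => φ s x)
        (∑' y : Λ, φ t y * (q (some y) (some x) + q (some y) none * φ t x)) t)
    (hψ_deriv : ∀ t, 0 ≤ t → ∀ x : Λ,
      HasDerivAt (fun s => ψ s x)
        (∑' y : Λ, ψ t y * (q (some y) (some x) + q (some y) none * ψ t x)) t)
    -- interchange of differentiation and summation is valid
    (hinterchange : ∀ T, 0 < T →
      Summable (fun x : Λ => ⨆ t : Set.Icc (0:ℝ) T,
        |(∑' y : Λ, φ (t:ℝ) y * (q (some y) (some x) + q (some y) none * φ (t:ℝ) x))
          - (∑' y : Λ, ψ (t:ℝ) y * (q (some y) (some x) + q (some y) none * ψ (t:ℝ) x))|))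
    (hinit : ∀ x : Λ, φ 0 x = ψ 0 x) :
    ∀ t, 0 ≤ t → ∀ x : Λ, φ t x = ψ t x := by
  have hq : IsBoundedRateMatrix q qbar := ⟨hq_nonneg, hq_summable, hq_diag, hqbar⟩
  have hφ (s : ℝ) (hs : 0 ≤ s) : IsSubprobability (φ s) :=
    ⟨hφ_mem s hs, hφ_summable s hs, hφ_mass s hs⟩
  have hψ (s : ℝ) (hs : 0 ≤ s) : IsSubprobability (ψ s) :=
    ⟨hψ_mem s hs, hψ_summable s hs, hψ_mass s hs⟩
  intro t ht x
  have hD_bdd (x : Λ) : BddAbove (range fun s : Icc (0:ℝ) (t + 1) =>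
      |forwardField q (φ s) x - forwardField q (ψ s) x|) := by
    refine ⟨4 * qbar, ?_⟩
    rintro _ ⟨s, rfl⟩
    linarith [abs_sub (forwardField q (φ s) x) (forwardField q (ψ s) x),
      hq.abs_forwardField_le (hφ s s.2.1) x, hq.abs_forwardField_le (hψ s s.2.1) x]
  exact sub_eq_zero.1 (eq_zero_of_tsum_abs_deriv_le (g := fun x s => φ s x - ψ s x)
    (hinterchange (t + 1) (by linarith))
    (fun x s hs => ((hφ_deriv s hs.1 x).sub (hψ_deriv s hs.1 x)).hasDerivWithinAt)
    (fun x s hs => le_ciSup (hD_bdd x) ⟨s, hs⟩) (fun x => sub_eq_zero.2 (hinit x))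
    (fun s hs => hq.tsum_abs_forwardField_sub_le (hφ s hs.1) (hψ s hs.1)) ⟨ht, by linarith⟩ x)

/-- the nonlinear forward equations have a unique solution. -/
theorem fv_forward_equations_unique
    {Λ : Type*} [Countable Λ] [Nonempty Λ] [DecidableEq Λ]
    -- the rate matrix Q on Λ ∪ {0} (`none` is the absorbing state 0)
    (q : Option Λ → Option Λ → ℝ)
    (hq_nonneg : ∀ x y, x ≠ y → 0 ≤ q x y)
    (hq_absorb : ∀ y, q none y = 0)
    (hq_summable : ∀ x, Summable (fun y : {y : Option Λ // y ≠ x} => q x (y : Option Λ)))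
    (hq_diag : ∀ x, q x x = -∑' y : {y : Option Λ // y ≠ x}, q x (y : Option Λ))
    (qbar : ℝ)
    (hqbar : ∀ x, (∑' y : {y : Option Λ // y ≠ x}, q x (y : Option Λ)) ≤ qbar)
    (C : ℝ) (hC : C = ⨆ x : Λ, q (some x) none)
    -- two solutions φ and ψ of the nonlinear forward equations
    (φ ψ : ℝ → Λ → ℝ)
    (hφ_mem : ∀ t, 0 ≤ t → ∀ x, φ t x ∈ Set.Icc (0:ℝ) 1)
    (hψ_mem : ∀ t, 0 ≤ t → ∀ x, ψ t x ∈ Set.Icc (0:ℝ) 1)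
    (hφ_summable : ∀ t, 0 ≤ t → Summable (φ t))
    (hψ_summable : ∀ t, 0 ≤ t → Summable (ψ t))
    (hφ_mass : ∀ t, 0 ≤ t → ∑' x : Λ, φ t x ≤ 1)
    (hψ_mass : ∀ t, 0 ≤ t → ∑' x : Λ, ψ t x ≤ 1)
    (hφ_deriv : ∀ t, 0 ≤ t → ∀ x : Λ,
      HasDerivAt (fun s => φ s x)
        (∑' y : Λ, φ t y * (q (some y) (some x) + q (some y) none * φ t x)) t)
    (hψ_deriv : ∀ t, 0 ≤ t → ∀ x : Λ,
      HasDerivAt (fun s => ψ s x)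
        (∑' y : Λ, ψ t y * (q (some y) (some x) + q (some y) none * ψ t x)) t)
    -- interchange of differentiation and summation is valid
    (hinterchange : ∀ T, 0 < T →
      Summable (fun x : Λ => ⨆ t : Set.Icc (0:ℝ) T,
        |(∑' y : Λ, φ (t:ℝ) y * (q (some y) (some x) + q (some y) none * φ (t:ℝ) x))
          - (∑' y : Λ, ψ (t:ℝ) y * (q (some y) (some x) + q (some y) none * ψ (t:ℝ) x))|))
    (hinit : ∀ x : Λ, φ 0 x = ψ 0 x) :
    ∀ t, 0 ≤ t → ∀ x : Λ, φ t x = ψ t x :=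
  fv_forward_equations_unique_general q hq_nonneg hq_summable hq_diag qbar hqbar φ ψ hφ_mem hψ_mem
    hφ_summable hψ_summable hφ_mass hψ_mass hφ_deriv hψ_deriv hinterchange hinit
end

section
/- Consider the continuous-time Markov chain on the three-point state space S = {(1,1),(2,0),(0,2)} with jump rates a((0,2),(1,1)) = a((1,1),(0,2)) = a((2,0),(1,1)) = 2, a((1,1),(2,0)) = 1, and all other rates 0. Then the probability vector π with π((1,1)) = 2/5, π((2,0)) = 1/5, π((0,2)) = 2/5 is the unique stationary distribution (i.e. the unique probability vector satisfying ∑_{s∈S} π(s)a(s,s') = π(s')·∑_{s''≠s'} a(s',s'') for all s' ∈ S). Consequently the stationary mean proportion of particles at state 1, ρ²(1) := (2·π((2,0)) + 1·π((1,1)))/2 = 2/5, differs from ν(1) = (3−√5)/2, the value at 1 of the unique quasi-stationary distribution of the chain on {1,2} with rates q(1,0) = q(1,2) = q(2,1) = 1. -/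
open scoped BigOperators

/-- the unlabeled two-particle Fleming–Viot chain on the three states
`(1,1), (2,0), (0,2)` (encoded as `0, 1, 2 : Fin 3` respectively) with rates
`a((0,2),(1,1)) = a((1,1),(0,2)) = a((2,0),(1,1)) = 2`, `a((1,1),(2,0)) = 1` and all other
rates `0` has the unique stationary distribution `π = (2/5, 1/5, 2/5)`; consequently the
stationary mean proportion of particles at state 1, `ρ²(1) = (2·π((2,0)) + 1·π((1,1)))/2`,
equals `2/5` and differs from `ν(1) = (3 - √5)/2`, the value at state 1 of any
quasi-stationary distribution of the absorbed chain on `{1,2}` with rates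
`q(1,0) = q(1,2) = q(2,1) = 1`. -/
theorem fv_two_particle_stationary_vs_qsd
    (a : Fin 3 → Fin 3 → ℝ)
    (h01 : a 0 1 = 1) (h02 : a 0 2 = 2) (h10 : a 1 0 = 2) (h12 : a 1 2 = 0)
    (h20 : a 2 0 = 2) (h21 : a 2 1 = 0)
    (π : Fin 3 → ℝ) (hπ : π = ![2/5, 1/5, 2/5]) :
    -- π is a stationary distribution
    ((∀ s, 0 ≤ π s) ∧ (∑ s : Fin 3, π s) = 1 ∧
        (∀ s' : Fin 3,
          ∑ s ∈ Finset.univ.erase s', π s * a s s'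
            = π s' * ∑ s'' ∈ Finset.univ.erase s', a s' s''))
      -- and it is the unique stationary distribution
      ∧ (∀ π' : Fin 3 → ℝ,
          ((∀ s, 0 ≤ π' s) ∧ (∑ s : Fin 3, π' s) = 1 ∧
            (∀ s' : Fin 3,
              ∑ s ∈ Finset.univ.erase s', π' s * a s s'
                = π' s' * ∑ s'' ∈ Finset.univ.erase s', a s' s''))
          → π' = π)
      -- the stationary mean proportion of particles at state 1 is 2/5
      ∧ (2 * π 1 + 1 * π 0) / 2 = 2 / 5
      -- and it differs from ν(1) for any QSD ν of the absorbed two-state chain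
      ∧ ∀ ν : Fin 2 → ℝ,
          ((∀ x, 0 ≤ ν x) ∧ (∑ x : Fin 2, ν x) = 1 ∧
            (∀ x : Fin 2,
              ∑ y : Fin 2,
                ν y * (![![(-2 : ℝ), 1], ![1, -1]] y x + ![(1 : ℝ), 0] y * ν x) = 0))
          → (2 * π 1 + 1 * π 0) / 2 ≠ ν 0 := by
  subst hπ
  have herase : ∀ (f : Fin 3 → ℝ) (s' : Fin 3),
      ∑ s ∈ Finset.univ.erase s', f s = (∑ s : Fin 3, f s) - f s' := by
    intro f s'
    rw [Finset.sum_erase_eq_sub (Finset.mem_univ s')]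
  refine ⟨⟨?_, ?_, ?_⟩, ?_, ?_, ?_⟩
  · intro s; fin_cases s <;> norm_num
  · simp [Fin.sum_univ_three]; norm_num
  · intro s'
    fin_cases s' <;>
      simp [herase, Fin.sum_univ_three, h01, h02, h10, h12, h20, h21] <;> ring
  · rintro π' ⟨_, hsum, hst⟩
    have e0 := hst 0
    have e1 := hst 1
    simp only [herase, Fin.sum_univ_three, h01, h02, h10, h12, h20, h21] at e0 e1
    rw [Fin.sum_univ_three] at hsum
    funext s
    fin_cases s <;> simp <;> linarith
  · norm_num
  · rintro ν ⟨_, hsum, hq⟩ h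
    have e0 := hq 0
    simp [Fin.sum_univ_two] at e0
    rw [Fin.sum_univ_two] at hsum
    simp at h
    nlinarith [hsum, e0, h]
end
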